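/- arXiv:1411.4477 — 5 statements merged into one kernel-verified Lean document; each statement's English description precedes it below -/
import Mathlib

section
/- Let W_n = S_n/n be the relative number of drawn red balls after n drawings in a Pólya urn with parameters a = r/c and b = w/c, and let Z ~ Beta(a,b). Then for every continuously differentiable function h : [0,1] → ℝ with Lipschitz-continuous derivative h', one has |E[h(W_n)] − E[h(Z)]| ≤ (C(a,b)/n)·‖h'‖·( ab/(a+b) + ((a+b)C(a+1,b+1)/6)·(1 + (a+b−1)/n) ) + (C(a+1,b+1)/(6n))·‖h''‖·(1 + (a+b−1)/n), where ‖h''‖ denotes the minimum Lipschitz constant of h'. -/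
open MeasureTheory Set Filter Topology Real

noncomputable section

/-- The Euler Beta function `B(a,b) = ∫_0^1 x^(a-1) (1-x)^(b-1) dx`. -/
def betaFn (a b : ℝ) : ℝ := ∫ x in (0:ℝ)..1, x ^ (a - 1) * (1 - x) ^ (b - 1)

/-- The density of the Beta distribution with parameters `a, b > 0`. -/
def betaPDF (a b : ℝ) (x : ℝ) : ℝ :=
  Set.indicator (Set.Ioo (0:ℝ) 1) (fun x => x ^ (a - 1) * (1 - x) ^ (b - 1) / betaFn a b) x

/-- The Beta distribution `Beta(a,b)` as a measure on `ℝ`. -/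
def betaMeasure (a b : ℝ) : Measure ℝ :=
  volume.withDensity (fun x => ENNReal.ofReal (betaPDF a b x))

/-- `E[h(Z)]` for `Z ∼ Beta(a,b)`. -/
def betaMean (a b : ℝ) (h : ℝ → ℝ) : ℝ := ∫ x, h x * betaPDF a b x

/-- The distribution function of `Beta(a,b)`. -/
def betaCDF (a b : ℝ) (x : ℝ) : ℝ := ∫ t in Iic x, betaPDF a b t

/-- The constant `C(a,b)` from the bounds on the solution of the Beta Stein equation. -/
def Cst (a b : ℝ) : ℝ :=
  if a = b then
    (if a < 1 then 4 else 2 * a * Real.sqrt π * Real.Gamma a / Real.Gamma (a + 1 / 2))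
  else
    2 * (a + b) *
      (if a ≤ 1 ∧ b ≤ 1 then betaFn a b
       else if a ≤ 1 then a⁻¹
       else if b ≤ 1 then b⁻¹
       else (a * b * betaFn a b)⁻¹)

/-- The standard solution `g_h` of the Beta Stein equation
`x(1-x) g'(x) + (a+b)(a/(a+b) - x) g(x) = h(x) - E[h(Z)]`. -/
def betaG (a b : ℝ) (h : ℝ → ℝ) (x : ℝ) : ℝ :=
  (∫ t in Iic x, (h t - betaMean a b h) * betaPDF a b t) / (x * (1 - x) * betaPDF a b x)

/-- The derivative of the standard solution, defined everywhere via the Stein equation. -/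
def betaG' (a b : ℝ) (h : ℝ → ℝ) (x : ℝ) : ℝ :=
  (h x - betaMean a b h - (a + b) * (a / (a + b) - x) * betaG a b h x) / (x * (1 - x))

/-! The urn is a Beta mixture of binomials: `P(S_n = k) = E[C(n,k) Zᵏ (1-Z)ⁿ⁻ᵏ]` with
`Z ∼ Beta(a,b)`, so `E[h(W_n)] = E[B_n h(Z)]` for the Bernstein operator `B_n`. Expanding `h` to
first order around `x` and using that `Bin(n,x)` has mean `nx` and variance `nx(1-x)` gives
`|B_n h(x) - h(x)| ≤ ‖h''‖ x(1-x)/n`, hence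
`|E[h(W_n)] - E[h(Z)]| ≤ ‖h''‖ E[Z(1-Z)]/n = ‖h''‖ ab/((a+b)(a+b+1)n)`.
Since `C(a+1,b+1) ≥ 2` this is dominated by the `‖h''‖` term of the claimed bound alone. -/

lemma betaFn_eq_setIntegral (p q : ℝ) :
    betaFn p q = ∫ x in Ioo (0:ℝ) 1, x ^ (p - 1) * (1 - x) ^ (q - 1) := by
  rw [betaFn, intervalIntegral.integral_of_le zero_le_one, integral_Ioc_eq_integral_Ioo]

lemma ofReal_betaFn (p q : ℝ) : (betaFn p q : ℂ) = Complex.betaIntegral p q := by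
  rw [Complex.betaIntegral, betaFn, ← intervalIntegral.integral_ofReal]
  refine intervalIntegral.integral_congr fun x hx => ?_
  rw [uIcc_of_le zero_le_one] at hx
  push_cast
  rw [Complex.ofReal_cpow hx.1, Complex.ofReal_cpow (sub_nonneg.2 hx.2)]
  push_cast
  ring

lemma betaFn_eq_Gamma_mul_Gamma_div {p q : ℝ} (hp : 0 < p) (hq : 0 < q) :
    betaFn p q = Gamma p * Gamma q / Gamma (p + q) := by
  have h := Complex.betaIntegral_eq_Gamma_mul_div p q (by simpa) (by simpa)
  rw [← ofReal_betaFn, ← Complex.ofReal_add] at h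
  simp only [Complex.Gamma_ofReal] at h
  exact_mod_cast h

lemma betaFn_pos {p q : ℝ} (hp : 0 < p) (hq : 0 < q) : 0 < betaFn p q := by
  rw [betaFn_eq_Gamma_mul_Gamma_div hp hq]
  have := Gamma_pos_of_pos hp; have := Gamma_pos_of_pos hq
  have := Gamma_pos_of_pos (add_pos hp hq)
  positivity

lemma Real.Gamma_add_nat_eq_prod_mul {p : ℝ} (hp : 0 < p) (k : ℕ) :
    Gamma (p + k) = (∏ i ∈ Finset.range k, (p + i)) * Gamma p := by
  induction k with
  | zero => simp
  | succ k ih =>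
    rw [Nat.cast_succ, ← add_assoc, Gamma_add_one (by positivity), ih, Finset.prod_range_succ]
    ring

lemma betaFn_add_nat_add_nat {p q : ℝ} (hp : 0 < p) (hq : 0 < q) (k m : ℕ) :
    betaFn (p + k) (q + m) =
      (∏ i ∈ Finset.range k, (p + i)) * (∏ j ∈ Finset.range m, (q + j)) /
        (∏ l ∈ Finset.range (k + m), (p + q + l)) * betaFn p q := by
  have hprod : 0 < ∏ l ∈ Finset.range (k + m), (p + q + l) :=
    Finset.prod_pos fun l _ => by positivity
  have hsum : p + k + (q + m) = p + q + (k + m : ℕ) := by push_cast; ring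
  rw [betaFn_eq_Gamma_mul_Gamma_div (by positivity) (by positivity),
    betaFn_eq_Gamma_mul_Gamma_div hp hq, hsum, Gamma_add_nat_eq_prod_mul hp,
    Gamma_add_nat_eq_prod_mul hq, Gamma_add_nat_eq_prod_mul (add_pos hp hq)]
  have := (Gamma_pos_of_pos (add_pos hp hq)).ne'
  field_simp

lemma integrableOn_beta_integrand {p q : ℝ} (hp : 0 < p) (hq : 0 < q) :
    IntegrableOn (fun x : ℝ => x ^ (p - 1) * (1 - x) ^ (q - 1)) (Ioo 0 1) := by
  have hc := (Complex.betaIntegral_convergent (u := p) (v := q) (by simpa) (by simpa)).norm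
  rw [intervalIntegrable_iff_integrableOn_Ioc_of_le zero_le_one] at hc
  refine (hc.mono_set Ioo_subset_Ioc_self).congr_fun (fun x hx => ?_) measurableSet_Ioo
  have h1 : (0:ℝ) ≤ 1 - x := sub_nonneg.2 hx.2.le
  have e1 : (x : ℂ) ^ ((p : ℂ) - 1) = ((x ^ (p - 1) : ℝ) : ℂ) := by
    rw [Complex.ofReal_cpow hx.1.le]; push_cast; rfl
  have e2 : (1 - (x : ℂ)) ^ ((q : ℂ) - 1) = (((1 - x) ^ (q - 1) : ℝ) : ℂ) := by
    rw [Complex.ofReal_cpow h1]; push_cast; rfl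
  simp only [norm_mul, e1, e2, Complex.norm_real, Real.norm_of_nonneg (rpow_nonneg hx.1.le _),
    Real.norm_of_nonneg (rpow_nonneg h1 _)]

lemma setIntegral_rpow_sub_one_Ioo {p : ℝ} (hp : 0 < p) :
    ∫ x in Ioo (0:ℝ) 1, x ^ (p - 1) = 1 / p := by
  rw [← integral_Ioc_eq_integral_Ioo, ← intervalIntegral.integral_of_le zero_le_one,
    integral_rpow (Or.inl (by linarith)), sub_add_cancel, zero_rpow hp.ne', one_rpow]
  ring

lemma betaFn_le_one_div {p q : ℝ} (hp : 0 < p) (hq : 1 ≤ q) : betaFn p q ≤ 1 / p := by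
  rw [betaFn_eq_setIntegral, ← setIntegral_rpow_sub_one_Ioo hp]
  refine setIntegral_mono_on (integrableOn_beta_integrand hp (by linarith))
    (by simpa using integrableOn_beta_integrand hp one_pos) measurableSet_Ioo fun x hx => ?_
  refine mul_le_of_le_one_right (rpow_nonneg hx.1.le _) ?_
  exact rpow_le_one (sub_nonneg.2 hx.2.le) (by linarith [hx.1]) (by linarith)

lemma one_div_le_betaFn {p q : ℝ} (hp : 0 < p) (hq : 0 < q) (hq1 : q ≤ 1) :
    1 / p ≤ betaFn p q := by
  rw [betaFn_eq_setIntegral, ← setIntegral_rpow_sub_one_Ioo hp]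
  refine setIntegral_mono_on (by simpa using integrableOn_beta_integrand hp one_pos)
    (integrableOn_beta_integrand hp hq) measurableSet_Ioo fun x hx => ?_
  refine le_mul_of_one_le_right (rpow_nonneg hx.1.le _) ?_
  exact one_le_rpow_of_pos_of_le_one_of_nonpos (by linarith [hx.2]) (by linarith [hx.1])
    (by linarith)

section BetaPDF

variable {a b : ℝ}

lemma betaPDF_nonneg (ha : 0 < a) (hb : 0 < b) (x : ℝ) : 0 ≤ betaPDF a b x := by
  refine indicator_nonneg (fun x hx => ?_) x
  have := betaFn_pos ha hb
  have := rpow_nonneg hx.1.le (a - 1)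
  have := rpow_nonneg (sub_nonneg.2 hx.2.le) (b - 1)
  positivity

lemma integral_mul_betaPDF (a b : ℝ) (f : ℝ → ℝ) :
    ∫ x, f x * betaPDF a b x =
      ∫ x in Ioo 0 1, f x * (x ^ (a - 1) * (1 - x) ^ (b - 1) / betaFn a b) := by
  simp_rw [betaPDF, ← indicator_mul_right]
  exact integral_indicator measurableSet_Ioo

lemma integrable_mul_betaPDF (ha : 0 < a) (hb : 0 < b) {f : ℝ → ℝ}
    (hf : ContinuousOn f (Icc 0 1)) : Integrable (fun x => f x * betaPDF a b x) := by
  simp_rw [betaPDF, ← indicator_mul_right]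
  rw [integrable_indicator_iff measurableSet_Ioo]
  exact IntegrableOn.continuousOn_mul_of_subset hf
    ((integrableOn_beta_integrand ha hb).div_const _) isCompact_Icc measurableSet_Ioo
    Ioo_subset_Icc_self

lemma integral_pow_mul_one_sub_pow_mul_betaPDF (a b : ℝ) (k m : ℕ) :
    ∫ x, x ^ k * (1 - x) ^ m * betaPDF a b x = betaFn (a + k) (b + m) / betaFn a b := by
  rw [integral_mul_betaPDF, betaFn_eq_setIntegral (a + k), ← integral_div]
  refine setIntegral_congr_fun measurableSet_Ioo fun x hx => ?_
  rw [show a + k - 1 = k + (a - 1) by ring, show b + m - 1 = m + (b - 1) by ring,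
    rpow_add hx.1, rpow_add (sub_pos.2 hx.2), rpow_natCast, rpow_natCast]
  ring

lemma integral_mul_one_sub_mul_betaPDF (ha : 0 < a) (hb : 0 < b) :
    ∫ x, x * (1 - x) * betaPDF a b x = a * b / ((a + b) * (a + b + 1)) := by
  have := integral_pow_mul_one_sub_pow_mul_betaPDF a b 1 1
  simp only [pow_one, Nat.cast_one] at this
  have h11 := betaFn_add_nat_add_nat ha hb 1 1
  norm_num [Finset.prod_range_succ] at h11
  rw [this, h11]
  have := (betaFn_pos ha hb).ne'
  field_simp

end BetaPDF

lemma abs_sub_sub_derivWithin_mul_le {s : Set ℝ} (hs : Convex ℝ s) {f : ℝ → ℝ}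
    (hf : DifferentiableOn ℝ f s) {L : NNReal} (hL : LipschitzOnWith L (derivWithin f s) s)
    {x y : ℝ} (hx : x ∈ s) (hy : y ∈ s) :
    |f y - f x - derivWithin f s x * (y - x)| ≤ L * (y - x) ^ 2 := by
  set f' := derivWithin f s
  have hseg : uIcc x y ⊆ s := segment_eq_uIcc x y ▸ hs.segment_subset hx hy
  have hderiv : ∀ t ∈ uIcc x y,
      HasDerivWithinAt (fun t => f t - f' x * t) (f' t - f' x) (uIcc x y) t := fun t ht => by
    refine ((hf t (hseg ht)).hasDerivWithinAt.mono hseg).sub ?_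
    simpa using (hasDerivWithinAt_id t (uIcc x y)).const_mul (f' x)
  have hbound : ∀ t ∈ uIcc x y, ‖f' t - f' x‖ ≤ L * |y - x| := fun t ht =>
    calc ‖f' t - f' x‖ ≤ L * |t - x| := hL.dist_le_mul t (hseg ht) x hx
      _ ≤ L * |y - x| := mul_le_mul_of_nonneg_left (abs_sub_left_of_mem_uIcc ht) L.2
  have := Convex.norm_image_sub_le_of_norm_hasDerivWithin_le hderiv hbound (convex_uIcc x y)
    left_mem_uIcc right_mem_uIcc
  rw [Real.norm_eq_abs, Real.norm_eq_abs] at this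
  calc |f y - f x - f' x * (y - x)| = |f y - f' x * y - (f x - f' x * x)| := by ring_nf
    _ ≤ L * |y - x| * |y - x| := this
    _ = L * (y - x) ^ 2 := by rw [mul_assoc, ← sq, sq_abs]

def bernsteinOperator (n : ℕ) (f : ℝ → ℝ) (x : ℝ) : ℝ :=
  ∑ k ∈ Finset.range (n + 1), f (k / n) * (bernsteinPolynomial ℝ n k).eval x

lemma continuous_bernsteinOperator (n : ℕ) (f : ℝ → ℝ) :
    Continuous (bernsteinOperator n f) :=
  continuous_finsetSum _ fun _ _ => continuous_const.mul (Polynomial.continuous _)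

namespace bernsteinPolynomial

lemma eval_nonneg (n k : ℕ) {x : ℝ} (hx : x ∈ Icc (0:ℝ) 1) :
    0 ≤ (bernsteinPolynomial ℝ n k).eval x := by
  have := sub_nonneg.2 hx.2
  have := hx.1
  simp only [bernsteinPolynomial, Polynomial.eval_mul, Polynomial.eval_pow, Polynomial.eval_sub,
    Polynomial.eval_natCast, Polynomial.eval_X, Polynomial.eval_one]
  positivity

lemma sum_eval (n : ℕ) (x : ℝ) :
    ∑ k ∈ Finset.range (n + 1), (bernsteinPolynomial ℝ n k).eval x = 1 := by
  simpa [Polynomial.eval_finsetSum] using congrArg (Polynomial.eval x) (sum ℝ n)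

lemma sum_mul_eval (n : ℕ) (x : ℝ) :
    ∑ k ∈ Finset.range (n + 1), (k : ℝ) * (bernsteinPolynomial ℝ n k).eval x = n * x := by
  simpa [Polynomial.eval_finsetSum] using congrArg (Polynomial.eval x) (sum_smul ℝ n)

lemma variance_eval (n : ℕ) (x : ℝ) :
    ∑ k ∈ Finset.range (n + 1), (n * x - k) ^ 2 * (bernsteinPolynomial ℝ n k).eval x =
      n * x * (1 - x) := by
  simpa [Polynomial.eval_finsetSum] using congrArg (Polynomial.eval x) (variance ℝ n)

end bernsteinPolynomial

lemma abs_bernsteinOperator_sub_le {f : ℝ → ℝ} (hf : DifferentiableOn ℝ f (Icc 0 1))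
    {L : NNReal} (hL : LipschitzOnWith L (derivWithin f (Icc 0 1)) (Icc 0 1)) {n : ℕ}
    (hn : 0 < n) {x : ℝ} (hx : x ∈ Icc (0:ℝ) 1) :
    |bernsteinOperator n f x - f x| ≤ L / n * (x * (1 - x)) := by
  set b := fun k : ℕ => (bernsteinPolynomial ℝ n k).eval x
  set f' := derivWithin f (Icc 0 1) x
  have hn' : (n : ℝ) ≠ 0 := by positivity
  have hterm : ∀ k : ℕ, (f (k / n) - f x - f' * (k / n - x)) * b k =
      f (k / n) * b k - f x * b k - f' / n * (k * b k) + f' * x * b k := fun k => by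
    field_simp; ring
  have hexpand : bernsteinOperator n f x - f x =
      ∑ k ∈ Finset.range (n + 1), (f (k / n) - f x - f' * (k / n - x)) * b k := by
    simp only [hterm, Finset.sum_add_distrib, Finset.sum_sub_distrib, ← Finset.mul_sum,
      bernsteinPolynomial.sum_eval, bernsteinPolynomial.sum_mul_eval, b, bernsteinOperator]
    field_simp
    ring
  have hgrid : ∀ k ∈ Finset.range (n + 1), (k : ℝ) / n ∈ Icc (0:ℝ) 1 := fun k hk =>
    ⟨by positivity, div_le_one_of_le₀ (by exact_mod_cast Finset.mem_range_succ_iff.1 hk)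
      (Nat.cast_nonneg n)⟩
  rw [hexpand]
  calc |∑ k ∈ Finset.range (n + 1), (f (k / n) - f x - f' * (k / n - x)) * b k|
      ≤ ∑ k ∈ Finset.range (n + 1), |f (k / n) - f x - f' * (k / n - x)| * b k := by
        refine (Finset.abs_sum_le_sum_abs _ _).trans_eq (Finset.sum_congr rfl fun k _ => ?_)
        rw [abs_mul, abs_of_nonneg (bernsteinPolynomial.eval_nonneg n k hx)]
    _ ≤ ∑ k ∈ Finset.range (n + 1), L * ((k : ℝ) / n - x) ^ 2 * b k := by
        gcongr with k hk
        · exact bernsteinPolynomial.eval_nonneg n k hx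
        · exact abs_sub_sub_derivWithin_mul_le (convex_Icc 0 1) hf hL hx (hgrid k hk)
    _ = L / n ^ 2 * ∑ k ∈ Finset.range (n + 1), (n * x - k) ^ 2 * b k := by
        rw [Finset.mul_sum]
        refine Finset.sum_congr rfl fun k _ => ?_
        field_simp
        ring
    _ = L / n * (x * (1 - x)) := by
        rw [bernsteinPolynomial.variance_eval]
        field_simp

def polyaPMF (a b : ℝ) (n k : ℕ) : ℝ :=
  n.choose k * ((∏ i ∈ Finset.range k, (a + i)) * (∏ j ∈ Finset.range (n - k), (b + j)) /
    ∏ l ∈ Finset.range n, (a + b + l))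

lemma prod_range_add_mul_eq_pow_mul {r c : ℝ} (hc : c ≠ 0) (k : ℕ) :
    ∏ i ∈ Finset.range k, (r + c * i) = c ^ k * ∏ i ∈ Finset.range k, (r / c + i) := by
  rw [← Finset.card_range k, ← Finset.prod_const, Finset.card_range,
    ← Finset.prod_mul_distrib]
  refine Finset.prod_congr rfl fun i _ => ?_
  field_simp

lemma polya_urn_pmf_eq_polyaPMF {r w c : ℝ} (hc : c ≠ 0) {n k : ℕ} (hk : k ≤ n) :
    (n.choose k : ℝ) * (((∏ i ∈ Finset.range k, (r + c * i)) *
        ∏ j ∈ Finset.range (n - k), (w + c * j)) / ∏ l ∈ Finset.range n, (r + w + c * l)) =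
      polyaPMF (r / c) (w / c) n k := by
  have hsum : (r + w) / c = r / c + w / c := add_div r w c
  simp only [polyaPMF, prod_range_add_mul_eq_pow_mul hc]
  rw [hsum, ← Nat.add_sub_cancel' hk, pow_add, Nat.add_sub_cancel_left]
  have := pow_ne_zero k hc
  have := pow_ne_zero (n - k) hc
  field_simp

lemma polyaPMF_nonneg {a b : ℝ} (ha : 0 ≤ a) (hb : 0 ≤ b) (n k : ℕ) :
    0 ≤ polyaPMF a b n k := by
  unfold polyaPMF
  have := Finset.prod_nonneg fun i (_ : i ∈ Finset.range k) => add_nonneg ha i.cast_nonneg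
  have := Finset.prod_nonneg fun j (_ : j ∈ Finset.range (n - k)) => add_nonneg hb j.cast_nonneg
  have := Finset.prod_nonneg fun l (_ : l ∈ Finset.range n) =>
    add_nonneg (add_nonneg ha hb) l.cast_nonneg
  positivity

lemma polyaPMF_eq_integral_bernsteinPolynomial_mul_betaPDF {a b : ℝ} (ha : 0 < a) (hb : 0 < b)
    {n k : ℕ} (hk : k ≤ n) :
    polyaPMF a b n k = ∫ x, (bernsteinPolynomial ℝ n k).eval x * betaPDF a b x := by
  have hbern : ∀ x, (bernsteinPolynomial ℝ n k).eval x * betaPDF a b x =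
      n.choose k * (x ^ k * (1 - x) ^ (n - k) * betaPDF a b x) := fun x => by
    simp only [bernsteinPolynomial, Polynomial.eval_mul, Polynomial.eval_pow, Polynomial.eval_sub,
      Polynomial.eval_natCast, Polynomial.eval_X, Polynomial.eval_one]
    ring
  simp_rw [hbern]
  rw [integral_const_mul, integral_pow_mul_one_sub_pow_mul_betaPDF,
    betaFn_add_nat_add_nat ha hb, Nat.add_sub_cancel' hk, polyaPMF]
  have := (betaFn_pos ha hb).ne'
  field_simp

lemma integral_comp_eq_sum_measureReal {Ω : Type*} [MeasurableSpace Ω] (μ : Measure Ω)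
    [IsFiniteMeasure μ] {S : Ω → ℕ} (hS : Measurable S) {n : ℕ} (hSn : ∀ ω, S ω ≤ n)
    (g : ℕ → ℝ) :
    ∫ ω, g (S ω) ∂μ = ∑ k ∈ Finset.range (n + 1), μ.real {ω | S ω = k} * g k := by
  have hmeas : ∀ k, MeasurableSet {ω | S ω = k} := fun k => hS (measurableSet_singleton k)
  have hrepr : ∀ ω, g (S ω) =
      ∑ k ∈ Finset.range (n + 1), {ω | S ω = k}.indicator (fun _ => g k) ω := fun ω => by
    simp [indicator_apply, Nat.lt_succ_of_le (hSn ω)]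
  simp_rw [hrepr]
  rw [integral_finsetSum _ fun k _ => (integrable_const (g k)).indicator (hmeas k)]
  refine Finset.sum_congr rfl fun k _ => ?_
  rw [integral_indicator_const _ (hmeas k), smul_eq_mul]

lemma integral_comp_div_eq_integral_bernsteinOperator_mul_betaPDF {a b : ℝ} (ha : 0 < a)
    (hb : 0 < b) {Ω : Type*} [MeasurableSpace Ω] (μ : Measure Ω) [IsFiniteMeasure μ]
    {S : Ω → ℕ} (hS : Measurable S) {n : ℕ} (hSn : ∀ ω, S ω ≤ n)
    (hpmf : ∀ k ≤ n, μ {ω | S ω = k} = ENNReal.ofReal (polyaPMF a b n k)) (f : ℝ → ℝ) :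
    ∫ ω, f (S ω / n) ∂μ = ∫ x, bernsteinOperator n f x * betaPDF a b x := by
  rw [integral_comp_eq_sum_measureReal μ hS hSn fun k => f (k / n)]
  simp_rw [bernsteinOperator, Finset.sum_mul]
  rw [integral_finsetSum _ fun (k : ℕ) _ => integrable_mul_betaPDF ha hb
    (f := fun x => f (k / n) * (bernsteinPolynomial ℝ n k).eval x)
    (continuous_const.mul (Polynomial.continuous _)).continuousOn]
  refine Finset.sum_congr rfl fun k hk => ?_
  rw [measureReal_def, hpmf k (Finset.mem_range_succ_iff.1 hk),
    ENNReal.toReal_ofReal (polyaPMF_nonneg ha.le hb.le n k),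
    polyaPMF_eq_integral_bernsteinPolynomial_mul_betaPDF ha hb
      (Finset.mem_range_succ_iff.1 hk), ← integral_mul_const]
  congr 1 with x
  ring

lemma abs_integral_bernsteinOperator_mul_betaPDF_sub_betaMean_le {a b : ℝ} (ha : 0 < a)
    (hb : 0 < b) {f : ℝ → ℝ} (hf : DifferentiableOn ℝ f (Icc 0 1)) {L : NNReal}
    (hL : LipschitzOnWith L (derivWithin f (Icc 0 1)) (Icc 0 1)) {n : ℕ} (hn : 0 < n) :
    |(∫ x, bernsteinOperator n f x * betaPDF a b x) - betaMean a b f| ≤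
      L / n * (a * b / ((a + b) * (a + b + 1))) := by
  rw [betaMean, ← integral_mul_one_sub_mul_betaPDF ha hb, ← integral_const_mul,
    ← Real.norm_eq_abs,
    ← integral_sub (integrable_mul_betaPDF ha hb (continuous_bernsteinOperator n f).continuousOn)
      (integrable_mul_betaPDF ha hb hf.continuousOn)]
  refine norm_integral_le_of_norm_le ((integrable_mul_betaPDF ha hb
    (by fun_prop : Continuous fun x : ℝ => x * (1 - x)).continuousOn).const_mul _)
    (ae_of_all _ fun x => ?_)
  rw [← sub_mul, norm_mul, Real.norm_eq_abs, Real.norm_of_nonneg (betaPDF_nonneg ha hb x),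
    ← mul_assoc]
  by_cases hx : x ∈ Ioo 0 1
  · exact mul_le_mul_of_nonneg_right
      (abs_bernsteinOperator_sub_le hf hL hn (Ioo_subset_Icc_self hx)) (betaPDF_nonneg ha hb x)
  · simp [betaPDF, indicator_of_notMem hx]

lemma Cst_nonneg {a b : ℝ} (ha : 0 < a) (hb : 0 < b) : 0 ≤ Cst a b := by
  have := betaFn_pos ha hb
  have := Gamma_pos_of_pos ha
  have := Gamma_pos_of_pos (show 0 < a + 1 / 2 by positivity)
  unfold Cst
  split_ifs <;> positivity

lemma two_le_Cst {a b : ℝ} (ha : 1 < a) (hb : 1 < b) : 2 ≤ Cst a b := by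
  rcases eq_or_ne a b with rfl | hab
  · rw [Cst, if_pos rfl, if_neg (by linarith)]
    have hβ : betaFn a (1 / 2) = Gamma a * √π / Gamma (a + 1 / 2) := by
      rw [betaFn_eq_Gamma_mul_Gamma_div (by linarith) (by norm_num), Gamma_one_half_eq]
    calc (2 : ℝ) = 2 * a * (1 / a) := by field_simp
      _ ≤ 2 * a * betaFn a (1 / 2) :=
        mul_le_mul_of_nonneg_left (one_div_le_betaFn (by linarith) (by norm_num) (by norm_num))
          (by linarith)
      _ = _ := by rw [hβ]; ring
  · rw [Cst, if_neg hab, if_neg (by grind), if_neg (by linarith), if_neg (by linarith)]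
    have hβ := betaFn_pos (by linarith : 0 < a) (by linarith : 0 < b)
    have hle : a * b * betaFn a b ≤ b := by
      have := betaFn_le_one_div (by linarith : 0 < a) hb.le
      calc a * b * betaFn a b ≤ a * b * (1 / a) := by gcongr
        _ = b := by field_simp
    calc (2 : ℝ) ≤ 2 * (a + b) * b⁻¹ := by
          rw [← div_eq_mul_inv, le_div_iff₀ (by linarith)]; linarith
      _ ≤ 2 * (a + b) * (a * b * betaFn a b)⁻¹ := by gcongr

lemma three_mul_div_le_one_add_div {a b : ℝ} (ha : 0 < a) (hb : 0 < b) {n : ℕ} (hn : 0 < n) :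
    3 * (a * b / ((a + b) * (a + b + 1))) ≤ 1 + (a + b - 1) / n := by
  have hn1 : (1 : ℝ) ≤ n := by exact_mod_cast hn
  have hab : 4 * (a * b) ≤ (a + b) ^ 2 := by nlinarith [sq_nonneg (a - b)]
  rw [← mul_div_assoc, div_le_iff₀ (by positivity)]
  rcases le_total 1 (a + b) with hs | hs
  · have : 0 ≤ (a + b - 1) / n := div_nonneg (by linarith) (by linarith)
    nlinarith
  · have : a + b - 1 ≤ (a + b - 1) / n := by
      rw [le_div_iff₀ (by linarith)]; nlinarith
    nlinarith

/-- Main theorem: quantitative Beta approximation for the Pólya urn. If `S_n` has the Pólya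
distribution with parameters `n` and `a = r/c`, `b = w/c`, and `W = S_n/n`, then for every
`C^{1,1}` test function `h` on `[0,1]`,
`|E[h(W)] - E[h(Z)]| ≤ (C(a,b)/n) ‖h'‖ (ab/(a+b) + ((a+b) C(a+1,b+1)/6)(1 + (a+b-1)/n))
  + (C(a+1,b+1)/(6n)) ‖h''‖ (1 + (a+b-1)/n)` where `Z ∼ Beta(a,b)`. -/
theorem polya_beta_approximation
    {Ω : Type*} [MeasurableSpace Ω] (μ : Measure Ω) [IsProbabilityMeasure μ]
    (n r w c : ℕ) (hn : 0 < n) (hr : 0 < r) (hw : 0 < w) (hc : 0 < c)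
    (S : Ω → ℕ) (hSm : Measurable S) (hSle : ∀ ω, S ω ≤ n)
    (hpmf : ∀ k : ℕ, k ≤ n →
      μ {ω | S ω = k} = ENNReal.ofReal
        ((n.choose k : ℝ) *
          (((∏ i ∈ Finset.range k, ((r : ℝ) + c * i)) *
              ∏ j ∈ Finset.range (n - k), ((w : ℝ) + c * j)) /
            ∏ l ∈ Finset.range n, ((r : ℝ) + w + c * l))))
    (A B : ℝ) (hA : A = (r : ℝ) / c) (hB : B = (w : ℝ) / c)
    (W : Ω → ℝ) (hW : W = fun ω => (S ω : ℝ) / n)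
    (h : ℝ → ℝ) (hC1 : ContDiffOn ℝ 1 h (Set.Icc (0:ℝ) 1))
    (L₁ : ℝ) (hL₁ : ∀ x ∈ Set.Icc (0:ℝ) 1, |derivWithin h (Set.Icc (0:ℝ) 1) x| ≤ L₁)
    (L₂ : NNReal)
    (hL₂ : LipschitzOnWith L₂ (derivWithin h (Set.Icc (0:ℝ) 1)) (Set.Icc (0:ℝ) 1)) :
    |∫ ω, h (W ω) ∂μ - betaMean A B h| ≤
      Cst A B / n * L₁ *
          (A * B / (A + B) + (A + B) * Cst (A + 1) (B + 1) / 6 * (1 + (A + B - 1) / n)) +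
        Cst (A + 1) (B + 1) / (6 * n) * L₂ * (1 + (A + B - 1) / n) := by
  have hA0 : 0 < A := hA ▸ by positivity
  have hB0 : 0 < B := hB ▸ by positivity
  have hpmf' : ∀ k ≤ n, μ {ω | S ω = k} = ENNReal.ofReal (polyaPMF A B n k) := fun k hk => by
    rw [hpmf k hk, polya_urn_pmf_eq_polyaPMF (by positivity) hk, hA, hB]
  have hmix : ∫ ω, h (W ω) ∂μ = ∫ x, bernsteinOperator n h x * betaPDF A B x := by
    subst hW
    exact integral_comp_div_eq_integral_bernsteinOperator_mul_betaPDF hA0 hB0 μ hSm hSle hpmf' h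
  have hmain := abs_integral_bernsteinOperator_mul_betaPDF_sub_betaMean_le hA0 hB0
    (hC1.differentiableOn one_ne_zero) hL₂ hn
  have hvar := three_mul_div_le_one_add_div hA0 hB0 hn
  have hCst := two_le_Cst (by linarith : 1 < A + 1) (by linarith : 1 < B + 1)
  have hL₁0 : 0 ≤ L₁ := (abs_nonneg _).trans (hL₁ 0 ⟨le_rfl, zero_le_one⟩)
  have hfirst : 0 ≤ Cst A B / n * L₁ *
      (A * B / (A + B) + (A + B) * Cst (A + 1) (B + 1) / 6 * (1 + (A + B - 1) / n)) := by
    have := Cst_nonneg hA0 hB0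
    have : 0 ≤ 1 + (A + B - 1) / n := le_trans (by positivity) hvar
    positivity
  calc |∫ ω, h (W ω) ∂μ - betaMean A B h|
      ≤ L₂ / n * (A * B / ((A + B) * (A + B + 1))) := hmix ▸ hmain
    _ = L₂ / (6 * n) * (2 * (3 * (A * B / ((A + B) * (A + B + 1))))) := by ring
    _ ≤ L₂ / (6 * n) * (Cst (A + 1) (B + 1) * (1 + (A + B - 1) / n)) := by gcongr
    _ = Cst (A + 1) (B + 1) / (6 * n) * L₂ * (1 + (A + B - 1) / n) := by ring
    _ ≤ _ := le_add_of_nonneg_left hfirst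
end
end

section
/- Let p be a probability density which is positive and locally absolutely continuous on (a,b) with a > −∞, and let F be the associated distribution function. Then lim_{x↓a} F(x)/p(x) = 0 holds in each of the following cases: (a) p is bounded away from zero in some neighbourhood of a; (b) lim_{x↓a} p(x) = 0 and there is δ > 0 such that p is increasing on (a, a+δ); (c) lim_{x↓a} p(x) = 0 and there is δ > 0 such that p is convex on (a, a+δ); (d) lim_{x↓a} p(x) = 0 and there is δ > 0 such that p is concave on (a, a+δ); (e) p is analytic at a; (f) the limit lim_{x↓a} F(x)/p(x) exists. -/
open MeasureTheory Set Filter Topology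

noncomputable section

/-- The open interval `(a,b)` with extended-real endpoints, viewed as a set of reals. -/
def ooE (a b : EReal) : Set ℝ := {x : ℝ | a < (x : EReal) ∧ (x : EReal) < b}

/-- The closed interval `[a,b] ∩ ℝ` (the closure of `(a,b)` in `ℝ`). -/
def ccE (a b : EReal) : Set ℝ := {x : ℝ | a ≤ (x : EReal) ∧ (x : EReal) ≤ b}

/-- The filter on `ℝ` of right-neighbourhoods of the (possibly infinite) endpoint `a`:
for finite `a` this is `𝓝[>] a`, for `a = ⊥` it is `atBot`. -/
def nhdsGT (a : EReal) : Filter ℝ :=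
  Filter.comap (fun x : ℝ => (x : EReal)) (nhdsWithin a (Set.Ioi a))

/-- The filter on `ℝ` of left-neighbourhoods of the (possibly infinite) endpoint `b`. -/
def nhdsLT (b : EReal) : Filter ℝ :=
  Filter.comap (fun x : ℝ => (x : EReal)) (nhdsWithin b (Set.Iio b))

/-- `f` is (locally) an indefinite integral of `f'` on `s`. -/
def IsLocACOn (f f' : ℝ → ℝ) (s : Set ℝ) : Prop :=
  ∀ x ∈ s, ∀ y ∈ s, IntervalIntegrable f' volume x y ∧ f y - f x = ∫ t in x..y, f' t

/-- `f` is locally absolutely continuous on `s`. -/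
def LocACOn (f : ℝ → ℝ) (s : Set ℝ) : Prop := ∃ f', IsLocACOn f f' s

/-- Condition 1: `p` is a probability density which is positive and locally absolutely
continuous on `(a,b)` and vanishes outside of `(a,b)`. -/
structure Cond1 (a b : EReal) (p : ℝ → ℝ) : Prop where
  lt : a < b
  meas : Measurable p
  nonneg : ∀ x, 0 ≤ p x
  pos : ∀ x ∈ ooE a b, 0 < p x
  zero : ∀ x, x ∉ ooE a b → p x = 0
  integrable : MeasureTheory.Integrable p
  total : ∫ x, p x = 1
  locAC : LocACOn p (ooE a b)

/-- Condition 2: `γ` is Borel measurable, not identically zero, decreasing on `[a,b]`,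
with `E|γ(Z)| < ∞` and `E[γ(Z)] = 0`. -/
structure Cond2 (a b : EReal) (p γ : ℝ → ℝ) : Prop where
  meas : Measurable γ
  ne_zero : ∃ x ∈ ccE a b, γ x ≠ 0
  anti : AntitoneOn γ (ccE a b)
  integrable : MeasureTheory.Integrable (fun x => γ x * p x)
  mean_zero : ∫ x, γ x * p x = 0

/-- `I(x) = ∫_a^x γ(t) p(t) dt` (the density vanishes outside `(a,b)`). -/
def Ifun (γ p : ℝ → ℝ) (x : ℝ) : ℝ := ∫ t in Iic x, γ t * p t

/-- The distribution function `F` of the density `p`. -/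
def Ffun (p : ℝ → ℝ) (x : ℝ) : ℝ := ∫ t in Iic x, p t

/-- `η = I/p`. -/
def etaFun (γ p : ℝ → ℝ) (x : ℝ) : ℝ := Ifun γ p x / p x

/-- `x₀ = sup {x ∈ (a,b) : γ(x) > 0}`. -/
def xZero (a b : EReal) (γ : ℝ → ℝ) : ℝ := sSup {x | x ∈ ooE a b ∧ 0 < γ x}

/-- `E[h(Z)]` for `Z` with density `p`. -/
def meanOf (p h : ℝ → ℝ) : ℝ := ∫ x, h x * p x

/-- The standard solution `g_h` of the Stein equation `η g' + γ g = h - E[h(Z)]`. -/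
def gsol (γ p h : ℝ → ℝ) (x : ℝ) : ℝ :=
  (∫ t in Iic x, (h t - meanOf p h) * p t) / (p x * etaFun γ p x)

/-- The derivative of the standard solution, defined everywhere via the Stein equation. -/
def gsol' (γ p h : ℝ → ℝ) (x : ℝ) : ℝ :=
  (h x - meanOf p h - γ x * gsol γ p h x) / etaFun γ p x

/-! Everything rests on the bound `F(x) = ∫_a^x p ≤ (x - a) · sup_{(a,x)} p`. When `p` on `(a, x)`
is dominated by `C · p(x)` (with `C = 1` for increasing `p`, `C = 2` for concave `p`) it gives
`F/p ≤ C (x - a) → 0`; when `p ≥ m > 0` near `a`, simply `F/p ≤ F/m → 0`. A convex `p` with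
`p(a+) = 0` is increasing, and an analytic `p` is monotone near `a` because the zeros of `p'` are
isolated (Darboux). Finally, if `F/p → L > 0` then `p ≤ (2/L) F` near `a`, and the same bound
gives `F(x) ≤ (2/L)(x - a) F(x)`, which forces `F(x) = 0` although `p(x) > 0`. -/

theorem ConvexOn.monotoneOn_of_tendsto_nhdsGT {f : ℝ → ℝ} {a c l : ℝ}
    (hf : ConvexOn ℝ (Ioo a c) f) (hlim : Tendsto f (𝓝[>] a) (𝓝 l))
    (hl : ∀ y ∈ Ioo a c, l ≤ f y) : MonotoneOn f (Ioo a c) := by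
  intro x hx y hy hxy
  obtain rfl | hxy := hxy.eq_or_lt
  · exact le_rfl
  -- Letting `t ↓ a` in the slope inequality at `t < x < y` shows the slope on `[x, y]` is `≥ 0`.
  have hslope : (f x - l) / (x - a) ≤ (f y - f x) / (y - x) := by
    have hlim' : Tendsto (fun t => (f x - f t) / (x - t)) (𝓝[>] a) (𝓝 ((f x - l) / (x - a))) :=
      (tendsto_const_nhds.sub hlim).div
        ((tendsto_const_nhds.sub tendsto_id).mono_left nhdsWithin_le_nhds) (sub_ne_zero.2 hx.1.ne')
    refine le_of_tendsto hlim' ?_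
    filter_upwards [Ioo_mem_nhdsGT hx.1] with t ht
    exact hf.slope_mono_adjacent ⟨ht.1, ht.2.trans hx.2⟩ hy ht.2 hxy
  have hnonneg : 0 ≤ (f x - l) / (x - a) := div_nonneg (sub_nonneg.2 (hl x hx)) (sub_pos.2 hx.1).le
  have := hnonneg.trans hslope
  rwa [le_div_iff₀ (sub_pos.2 hxy), zero_mul, sub_nonneg] at this

theorem ConcaveOn.sub_mul_le_sub_mul_of_nonneg {f : ℝ → ℝ} {s : Set ℝ} (hf : ConcaveOn ℝ s f)
    {t x c : ℝ} (ht : t ∈ s) (hc : c ∈ s) (htx : t ≤ x) (hxc : x ≤ c) (hfc : 0 ≤ f c) :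
    (c - x) * f t ≤ (c - t) * f x := by
  obtain rfl | htx := htx.eq_or_lt
  · nlinarith
  obtain rfl | hxc := hxc.eq_or_lt
  · nlinarith
  have := hf.slope_anti_adjacent ht hc htx hxc
  rw [div_le_div_iff₀ (sub_pos.2 hxc) (sub_pos.2 htx)] at this
  nlinarith

theorem AnalyticAt.exists_monotoneOn_or_antitoneOn_Ioo {f : ℝ → ℝ} {a : ℝ}
    (hf : AnalyticAt ℝ f a) :
    ∃ u, a < u ∧ (MonotoneOn f (Ioo a u) ∨ AntitoneOn f (Ioo a u)) := by
  have hnear : ∀ᶠ z in 𝓝[>] a, AnalyticAt ℝ f z :=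
    hf.eventually_analyticAt.filter_mono nhdsWithin_le_nhds
  rcases hf.deriv.eventually_eq_zero_or_eventually_ne_zero with hzero | hne
  · obtain ⟨u, hu, hsub⟩ := mem_nhdsGT_iff_exists_Ioo_subset.1
      ((hzero.filter_mono nhdsWithin_le_nhds).and hnear)
    refine ⟨u, hu, Or.inl (monotoneOn_of_deriv_nonneg (convex_Ioo a u) ?_ ?_ ?_)⟩
    · exact fun z hz => (hsub hz).2.continuousAt.continuousWithinAt
    · rw [interior_Ioo]
      exact fun z hz => (hsub hz).2.differentiableAt.differentiableWithinAt
    · rw [interior_Ioo]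
      exact fun z hz => (hsub hz).1.ge
  · obtain ⟨u, hu, hsub⟩ := mem_nhdsGT_iff_exists_Ioo_subset.1
      ((hne.filter_mono (nhdsWithin_mono _ fun z hz => ne_of_gt hz)).and hnear)
    have hcont : ContinuousOn f (Ioo a u) :=
      fun z hz => (hsub hz).2.continuousAt.continuousWithinAt
    rcases hasDerivWithinAt_forall_lt_or_forall_gt_of_forall_ne (convex_Ioo a u)
      (fun z hz => (hsub hz).2.differentiableAt.hasDerivAt.hasDerivWithinAt)
      (fun z hz => (hsub hz).1) with hneg | hpos
    · refine ⟨u, hu, Or.inr (strictAntiOn_of_deriv_neg (convex_Ioo a u) hcont ?_).antitoneOn⟩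
      rwa [interior_Ioo]
    · refine ⟨u, hu, Or.inl (strictMonoOn_of_deriv_pos (convex_Ioo a u) hcont ?_).monotoneOn⟩
      rwa [interior_Ioo]

namespace Cond1

variable {a : ℝ} {b : EReal} {p : ℝ → ℝ}

theorem eq_zero_of_le (h : Cond1 a b p) {t : ℝ} (ht : t ≤ a) : p t = 0 :=
  h.zero t fun hmem => (EReal.coe_lt_coe_iff.1 hmem.1).not_ge ht

theorem eventually_pos (h : Cond1 a b p) : ∀ᶠ x in 𝓝[>] a, 0 < p x := by
  obtain ⟨c, hac, hcb⟩ := EReal.exists_between_coe_real h.lt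
  filter_upwards [Ioo_mem_nhdsGT (EReal.coe_lt_coe_iff.1 hac)] with x hx
  exact h.pos x ⟨EReal.coe_lt_coe_iff.2 hx.1, (EReal.coe_lt_coe_iff.2 hx.2).trans hcb⟩

theorem Ffun_eq_intervalIntegral (h : Cond1 a b p) (x : ℝ) :
    Ffun p x = ∫ t in a..x, p t := by
  have hFa : Ffun p a = 0 := by
    rw [Ffun, setIntegral_congr_fun measurableSet_Iic fun t ht => h.eq_zero_of_le ht]
    simp
  rw [← intervalIntegral.integral_Iic_sub_Iic h.integrable.integrableOn
    h.integrable.integrableOn, ← Ffun, ← Ffun, hFa, sub_zero]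

theorem Ffun_nonneg (h : Cond1 a b p) (x : ℝ) : 0 ≤ Ffun p x :=
  setIntegral_nonneg measurableSet_Iic fun t _ => h.nonneg t

theorem Ffun_mono (h : Cond1 a b p) : Monotone (Ffun p) := fun _ _ hxy =>
  setIntegral_mono_set h.integrable.integrableOn (ae_of_all _ h.nonneg)
    (Iic_subset_Iic.2 hxy).eventuallyLE

theorem tendsto_Ffun (h : Cond1 a b p) : Tendsto (Ffun p) (𝓝[>] a) (𝓝 0) := by
  have hcont : Continuous fun x => ∫ t in a..x, p t :=
    intervalIntegral.continuous_primitive (fun _ _ => h.integrable.intervalIntegrable) a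
  rw [funext h.Ffun_eq_intervalIntegral]
  exact (hcont.tendsto' a 0 (by simp)).mono_left nhdsWithin_le_nhds

theorem Ffun_le_mul (h : Cond1 a b p) {x M : ℝ} (hx : a ≤ x) (hM : ∀ t ∈ Ioo a x, p t ≤ M) :
    Ffun p x ≤ (x - a) * M := by
  rw [h.Ffun_eq_intervalIntegral]
  calc ∫ t in a..x, p t ≤ ∫ _ in a..x, M :=
        intervalIntegral.integral_mono_on_of_le_Ioo hx h.integrable.intervalIntegrable
          intervalIntegrable_const hM
    _ = (x - a) * M := by simp

theorem tendsto_Ffun_div_of_eventually_le (h : Cond1 a b p) {m : ℝ} (hm : 0 < m)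
    (hbd : ∀ᶠ x in 𝓝[>] a, m ≤ p x) :
    Tendsto (fun x => Ffun p x / p x) (𝓝[>] a) (𝓝 0) := by
  refine squeeze_zero' ?_ ?_ (by simpa using h.tendsto_Ffun.div_const m)
  · exact Eventually.of_forall fun x => div_nonneg (h.Ffun_nonneg x) (h.nonneg x)
  · filter_upwards [hbd] with x hx
    exact div_le_div_of_nonneg_left (h.Ffun_nonneg x) hm hx

theorem tendsto_Ffun_div_of_eventually_le_mul (h : Cond1 a b p) {C : ℝ}
    (hdom : ∀ᶠ x in 𝓝[>] a, ∀ t ∈ Ioo a x, p t ≤ C * p x) :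
    Tendsto (fun x => Ffun p x / p x) (𝓝[>] a) (𝓝 0) := by
  have hlin : Tendsto (fun x => C * (x - a)) (𝓝[>] a) (𝓝 0) :=
    ((continuous_const.mul (continuous_sub_right a)).tendsto' a 0 (by simp)).mono_left
      nhdsWithin_le_nhds
  refine squeeze_zero' ?_ ?_ hlin
  · exact Eventually.of_forall fun x => div_nonneg (h.Ffun_nonneg x) (h.nonneg x)
  · filter_upwards [hdom, h.eventually_pos, self_mem_nhdsWithin] with x hdom hpos hx
    rw [div_le_iff₀ hpos]
    calc Ffun p x ≤ (x - a) * (C * p x) := h.Ffun_le_mul hx.le hdom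
      _ = C * (x - a) * p x := by ring

theorem tendsto_Ffun_div_of_monotoneOn (h : Cond1 a b p) {u : ℝ} (hu : a < u)
    (hmono : MonotoneOn p (Ioo a u)) :
    Tendsto (fun x => Ffun p x / p x) (𝓝[>] a) (𝓝 0) := by
  refine h.tendsto_Ffun_div_of_eventually_le_mul (C := 1) ?_
  filter_upwards [Ioo_mem_nhdsGT hu] with x hx t ht
  rw [one_mul]
  exact hmono ⟨ht.1, ht.2.trans hx.2⟩ hx ht.2.le

theorem tendsto_Ffun_div_of_antitoneOn (h : Cond1 a b p) {u : ℝ} (hu : a < u)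
    (hanti : AntitoneOn p (Ioo a u)) :
    Tendsto (fun x => Ffun p x / p x) (𝓝[>] a) (𝓝 0) := by
  obtain ⟨z, hpz, hz⟩ := (h.eventually_pos.and (Ioo_mem_nhdsGT hu)).exists
  refine h.tendsto_Ffun_div_of_eventually_le hpz ?_
  filter_upwards [Ioo_mem_nhdsGT hz.1] with x hx
  exact hanti ⟨hx.1, hx.2.trans hz.2⟩ hz hx.2.le

theorem tendsto_Ffun_div_of_concaveOn (h : Cond1 a b p) {u : ℝ} (hu : a < u)
    (hccv : ConcaveOn ℝ (Ioo a u) p) :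
    Tendsto (fun x => Ffun p x / p x) (𝓝[>] a) (𝓝 0) := by
  obtain ⟨c, hc⟩ := nonempty_Ioo.2 hu
  refine h.tendsto_Ffun_div_of_eventually_le_mul (C := 2) ?_
  filter_upwards [Ioo_mem_nhdsGT (show a < (a + c) / 2 by linarith [hc.1])] with x hx t ht
  have hconc := hccv.sub_mul_le_sub_mul_of_nonneg ⟨ht.1, by linarith [hc.2, hx.2, ht.2]⟩ hc
    ht.2.le (by linarith [hx.2, hc.1]) (h.nonneg c)
  nlinarith [h.nonneg t, h.nonneg x, hx.1, hx.2, ht.1]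

theorem tendsto_Ffun_div_of_tendsto (h : Cond1 a b p) {L : ℝ}
    (hL : Tendsto (fun x => Ffun p x / p x) (𝓝[>] a) (𝓝 L)) :
    Tendsto (fun x => Ffun p x / p x) (𝓝[>] a) (𝓝 0) := by
  obtain rfl | hL0 := eq_or_ne L 0
  · exact hL
  have hLpos : 0 < L := (ge_of_tendsto hL (Eventually.of_forall fun x =>
    div_nonneg (h.Ffun_nonneg x) (h.nonneg x))).lt_of_ne' hL0
  have hp_le : ∀ᶠ t in 𝓝[>] a, p t ≤ 2 / L * Ffun p t := by
    filter_upwards [hL.eventually (lt_mem_nhds (half_lt_self hLpos)), h.eventually_pos]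
      with t ht hpos
    rw [lt_div_iff₀ hpos] at ht
    rw [div_mul_eq_mul_div, le_div_iff₀ hLpos]
    linarith
  obtain ⟨u, hu : a < u, hsub⟩ := mem_nhdsGT_iff_exists_Ioo_subset.1 hp_le
  obtain ⟨x, ⟨hpx, hxu⟩, hxL⟩ := ((h.eventually_pos.and (Ioo_mem_nhdsGT hu)).and
    (Ioo_mem_nhdsGT (show a < a + L / 2 by linarith))).exists
  have hFx : Ffun p x ≤ (x - a) * (2 / L * Ffun p x) :=
    h.Ffun_le_mul hxu.1.le fun t ht => (hsub ⟨ht.1, ht.2.trans hxu.2⟩).trans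
      (mul_le_mul_of_nonneg_left (h.Ffun_mono ht.2.le) (by positivity))
  have hFpos : 0 < Ffun p x := pos_of_mul_pos_right (hpx.trans_le (hsub hxu)) (by positivity)
  have hsmall : (x - a) * (2 / L) < 1 := by
    rw [← mul_div_assoc, div_lt_one hLpos]
    linarith [hxL.2]
  have := mul_lt_of_lt_one_left hFpos hsmall
  linarith [mul_assoc (x - a) (2 / L) (Ffun p x)]

end Cond1

/-- Mild sufficient conditions on the density `p` near a finite left endpoint `a`
ensuring the Mills ratio limit `lim_{x↓a} F(x)/p(x) = 0`. -/
theorem prop_mills_sufficient (a : ℝ) (b : EReal) (p : ℝ → ℝ)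
    (h1 : Cond1 (a : EReal) b p)
    (hcase :
      (∃ ε > (0:ℝ), ∃ m > (0:ℝ), ∀ x ∈ Ioo a (a + ε), m ≤ p x) ∨
      (Tendsto p (𝓝[>] a) (𝓝 0) ∧ ∃ δ > (0:ℝ), MonotoneOn p (Ioo a (a + δ))) ∨
      (Tendsto p (𝓝[>] a) (𝓝 0) ∧ ∃ δ > (0:ℝ), ConvexOn ℝ (Ioo a (a + δ)) p) ∨
      (Tendsto p (𝓝[>] a) (𝓝 0) ∧ ∃ δ > (0:ℝ), ConcaveOn ℝ (Ioo a (a + δ)) p) ∨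
      AnalyticAt ℝ p a ∨
      (∃ L : ℝ, Tendsto (fun x => Ffun p x / p x) (𝓝[>] a) (𝓝 L))) :
    Tendsto (fun x => Ffun p x / p x) (𝓝[>] a) (𝓝 0) := by
  rcases hcase with ⟨ε, hε, m, hm, hbd⟩ | ⟨-, δ, hδ, hmono⟩ | ⟨hlim, δ, hδ, hcvx⟩ |
    ⟨-, δ, hδ, hccv⟩ | hana | ⟨L, hL⟩
  · exact h1.tendsto_Ffun_div_of_eventually_le hm
      (mem_of_superset (Ioo_mem_nhdsGT (by linarith)) hbd)
  · exact h1.tendsto_Ffun_div_of_monotoneOn (by linarith) hmono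
  · exact h1.tendsto_Ffun_div_of_monotoneOn (by linarith)
      (hcvx.monotoneOn_of_tendsto_nhdsGT hlim fun y _ => h1.nonneg y)
  · exact h1.tendsto_Ffun_div_of_concaveOn (by linarith) hccv
  · obtain ⟨u, hu, hmono | hanti⟩ := hana.exists_monotoneOn_or_antitoneOn_Ioo
    · exact h1.tendsto_Ffun_div_of_monotoneOn hu hmono
    · exact h1.tendsto_Ffun_div_of_antitoneOn hu hanti
  · exact h1.tendsto_Ffun_div_of_tendsto hL

end
end

section
/- Assume Conditions 1 and 2 and let h be a Borel-measurable function on the closure of (a,b) with E|h(Z)| < ∞, with standard solution g_h of the Stein equation. Then: (a) if a > −∞ and h has a right limit h(a+) at a, then lim_{x↓a} g_h(x) = (h(a+) − E[h(Z)])/γ(a+), so g_h extends continuously to a; (b) if b < ∞ and h has a left limit h(b−) at b, then lim_{x↑b} g_h(x) = (h(b−) − E[h(Z)])/γ(b−), so g_h extends continuously to b. -/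
open MeasureTheory Set Filter Topology

noncomputable section

/-!
On `(a,b)` we have `p η = I`, so `g_h(x) = ∫_a^x (h - E h) p / ∫_a^x γ p`. Dividing numerator and
denominator by `P(a < Z ≤ x)` turns both into `p`-weighted averages of `h - E h` and of `γ` over
intervals shrinking to `a`, which converge to `h(a+) - E h` and `γ(a+)`. At `b` the same works
with integrals over `(x, b)`, because both integrands have mean zero.

If `γ(a+) = 0`, monotonicity gives `γ ≤ 0` on `(a,b)`; together with `E γ(Z) = 0` this forces
`I ≡ 0`, and then `g_h` and the claimed limit `(h(a+) - E h) / 0` are both the junk value `0`.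
-/

section WeightedAverage

variable {α ι : Type*} [MeasurableSpace α] {μ : Measure α} {u v w : α → ℝ} {c c' : ℝ}

lemma abs_setIntegral_mul_sub_le {s : Set α} {δ : ℝ} (hs : MeasurableSet s)
    (hw : IntegrableOn w s μ) (huw : IntegrableOn (fun t => u t * w t) s μ)
    (hw0 : ∀ t, 0 ≤ w t) (hδ : ∀ t ∈ s, |u t - c| ≤ δ) :
    |∫ t in s, u t * w t ∂μ - c * ∫ t in s, w t ∂μ| ≤ δ * ∫ t in s, w t ∂μ := by
  rw [← integral_const_mul (μ := μ.restrict s) c, ← integral_const_mul (μ := μ.restrict s) δ,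
    ← integral_sub huw (hw.const_mul c), ← Real.norm_eq_abs]
  refine norm_integral_le_of_norm_le (hw.const_mul δ)
    ((ae_restrict_iff' hs).2 (ae_of_all _ fun t ht => ?_))
  rw [Real.norm_eq_abs, ← sub_mul, abs_mul, abs_of_nonneg (hw0 t)]
  exact mul_le_mul_of_nonneg_right (hδ t ht) (hw0 t)

variable {L : Filter ι} {l : Filter α} {S : ι → Set α}

lemma tendsto_setIntegral_mul_div_setIntegral (hS : Tendsto S L l.smallSets)
    (hSm : ∀ i, MeasurableSet (S i)) (hu : Tendsto u l (𝓝 c)) (hw : Integrable w μ)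
    (huw : Integrable (fun t => u t * w t) μ) (hw0 : ∀ t, 0 ≤ w t)
    (hpos : ∀ᶠ i in L, 0 < ∫ t in S i, w t ∂μ) :
    Tendsto (fun i => (∫ t in S i, u t * w t ∂μ) / ∫ t in S i, w t ∂μ) L (𝓝 c) := by
  rw [Metric.tendsto_nhds]
  intro ε hε
  have hclose : ∀ᶠ i in L, S i ⊆ {t | |u t - c| ≤ ε / 2} :=
    tendsto_smallSets_iff.1 hS _ (hu.eventually (Metric.closedBall_mem_nhds c (half_pos hε)))
  filter_upwards [hclose, hpos] with i hi hF
  rw [Real.dist_eq, div_sub' hF.ne', abs_div, abs_of_pos hF, div_lt_iff₀ hF, mul_comm _ c]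
  calc _ ≤ ε / 2 * ∫ t in S i, w t ∂μ :=
        abs_setIntegral_mul_sub_le (hSm i) hw.integrableOn huw.integrableOn hw0 hi
    _ < ε * ∫ t in S i, w t ∂μ := by gcongr; linarith

lemma tendsto_setIntegral_div_setIntegral (hS : Tendsto S L l.smallSets)
    (hSm : ∀ i, MeasurableSet (S i)) (hu : Tendsto u l (𝓝 c)) (hv : Tendsto v l (𝓝 c'))
    (hc' : c' ≠ 0) (hw : Integrable w μ) (huw : Integrable (fun t => u t * w t) μ)
    (hvw : Integrable (fun t => v t * w t) μ) (hw0 : ∀ t, 0 ≤ w t)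
    (hpos : ∀ᶠ i in L, 0 < ∫ t in S i, w t ∂μ) :
    Tendsto (fun i => (∫ t in S i, u t * w t ∂μ) / ∫ t in S i, v t * w t ∂μ) L
      (𝓝 (c / c')) :=
  ((tendsto_setIntegral_mul_div_setIntegral hS hSm hu hw huw hw0 hpos).div
    (tendsto_setIntegral_mul_div_setIntegral hS hSm hv hw hvw hw0 hpos) hc').congr'
    (hpos.mono fun _ hF => div_div_div_cancel_right₀ hF.ne' _ _)

lemma setIntegral_eq_zero_of_nonneg_of_integral_eq_zero {f : α → ℝ} (hf0 : ∀ t, 0 ≤ f t)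
    (hf : Integrable f μ) (hzero : ∫ t, f t ∂μ = 0) (s : Set α) : ∫ t in s, f t ∂μ = 0 :=
  le_antisymm ((setIntegral_le_integral hf (ae_of_all _ hf0)).trans_eq hzero)
    (integral_nonneg hf0)

end WeightedAverage

lemma setIntegral_Iic_eq_neg_setIntegral_Ioi {f : ℝ → ℝ} (hf : Integrable f)
    (hzero : ∫ t, f t = 0) (x : ℝ) : ∫ t in Iic x, f t = -∫ t in Ioi x, f t := by
  rw [← compl_Iic, setIntegral_compl measurableSet_Iic hf, hzero, zero_sub, neg_neg]

lemma AntitoneOn.le_of_tendsto_nhdsGT {f : ℝ → ℝ} {s : Set ℝ} {a₀ t c : ℝ}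
    (hf : AntitoneOn f s) (hlim : Tendsto f (𝓝[>] a₀) (𝓝 c)) (ht : t ∈ s)
    (hsub : Ioo a₀ t ⊆ s) (hat : a₀ < t) : f t ≤ c :=
  ge_of_tendsto hlim (eventually_of_mem (Ioo_mem_nhdsGT hat) fun _ hr =>
    hf (hsub hr) ht hr.2.le)

lemma AntitoneOn.le_of_tendsto_nhdsLT {f : ℝ → ℝ} {s : Set ℝ} {b₀ t c : ℝ}
    (hf : AntitoneOn f s) (hlim : Tendsto f (𝓝[<] b₀) (𝓝 c)) (ht : t ∈ s)
    (hsub : Ioo t b₀ ⊆ s) (htb : t < b₀) : c ≤ f t :=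
  le_of_tendsto hlim (eventually_of_mem (Ioo_mem_nhdsLT htb) fun _ hr =>
    hf ht (hsub hr) hr.1.le)

lemma nhdsGT_coe (a₀ : ℝ) : nhdsGT (a₀ : EReal) = 𝓝[>] a₀ := by
  rw [_root_.nhdsGT, nhdsWithin, comap_inf, comap_principal, EReal.nhds_coe,
    comap_map EReal.coe_injective, nhdsWithin]
  simp [preimage, EReal.coe_lt_coe_iff, Ioi]

lemma nhdsLT_coe (b₀ : ℝ) : nhdsLT (b₀ : EReal) = 𝓝[<] b₀ := by
  rw [_root_.nhdsLT, nhdsWithin, comap_inf, comap_principal, EReal.nhds_coe,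
    comap_map EReal.coe_injective, nhdsWithin]
  simp [preimage, EReal.coe_lt_coe_iff, Iio]

lemma tendsto_Ioc_nhdsGT_smallSets (a₀ : ℝ) :
    Tendsto (Ioc a₀ ·) (𝓝[>] a₀) (𝓝[>] a₀).smallSets :=
  tendsto_smallSets_iff.2 fun _ hU => by
    obtain ⟨u, hu, hsub⟩ := mem_nhdsGT_iff_exists_Ioc_subset.1 hU
    filter_upwards [Ioo_mem_nhdsGT hu] with x hx
    exact (Ioc_subset_Ioc_right hx.2.le).trans hsub

lemma tendsto_Ioo_nhdsLT_smallSets (b₀ : ℝ) :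
    Tendsto (Ioo · b₀) (𝓝[<] b₀) (𝓝[<] b₀).smallSets :=
  tendsto_smallSets_iff.2 fun _ hU => by
    obtain ⟨l, hl, hsub⟩ := mem_nhdsLT_iff_exists_Ico_subset.1 hU
    filter_upwards [Ioo_mem_nhdsLT hl] with x hx
    exact Ioo_subset_Ico_self.trans ((Ico_subset_Ico_left hx.1.le).trans hsub)

section Intervals

variable {a b : EReal}

lemma ooE_subset_ccE : ooE a b ⊆ ccE a b := fun _ ht => ⟨ht.1.le, ht.2.le⟩

lemma Ioo_subset_ooE {c d : ℝ} (hc : a ≤ c) (hd : (d : EReal) ≤ b) : Ioo c d ⊆ ooE a b :=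
  fun _ ht =>
    ⟨hc.trans_lt (EReal.coe_lt_coe_iff.2 ht.1), (EReal.coe_lt_coe_iff.2 ht.2).trans_le hd⟩

lemma Iic_inter_ooE_coe {a₀ x : ℝ} (hx : (x : EReal) < b) :
    Iic x ∩ ooE a₀ b = Ioc a₀ x := by
  ext t
  simp only [mem_inter_iff, mem_Iic, ooE, mem_ofPred_eq, EReal.coe_lt_coe_iff, mem_Ioc]
  exact ⟨fun ht => ⟨ht.2.1, ht.1⟩,
    fun ht => ⟨ht.2, ht.1, (EReal.coe_le_coe_iff.2 ht.2).trans_lt hx⟩⟩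

lemma Ioi_inter_ooE_coe {b₀ x : ℝ} (hx : a < x) :
    Ioi x ∩ ooE a b₀ = Ioo x b₀ := by
  ext t
  simp only [mem_inter_iff, mem_Ioi, ooE, mem_ofPred_eq, EReal.coe_lt_coe_iff, mem_Ioo]
  exact ⟨fun ht => ⟨ht.1, ht.2.2⟩,
    fun ht => ⟨ht.1, hx.trans (EReal.coe_lt_coe_iff.2 ht.1), ht.2⟩⟩

end Intervals

section SteinSolution

variable {a b : EReal} {p γ h : ℝ → ℝ}

lemma gsol_eq_div_Ifun {x : ℝ} (hpx : p x ≠ 0) :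
    gsol γ p h x = (∫ t in Iic x, (h t - meanOf p h) * p t) / Ifun γ p x := by
  rw [gsol, etaFun, mul_div_cancel₀ _ hpx]

lemma gsol_eq_zero_of_Ifun_eq_zero (hI : ∀ x, Ifun γ p x = 0) : gsol γ p h = 0 := by
  ext x
  simp [gsol, etaFun, hI]

namespace Cond1

lemma setIntegral_mul_eq_inter_ooE (h1 : Cond1 a b p) (u : ℝ → ℝ) {s : Set ℝ}
    (hs : MeasurableSet s) : ∫ t in s, u t * p t = ∫ t in s ∩ ooE a b, u t * p t :=
  setIntegral_eq_of_subset_of_forall_sdiff_eq_zero hs inter_subset_left fun t ht => by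
    rw [h1.zero t fun hab => ht.2 ⟨ht.1, hab⟩, mul_zero]

lemma setIntegral_pos (h1 : Cond1 a b p) {s : Set ℝ} {c d : ℝ} (hcd : c < d)
    (hs : Ioo c d ⊆ s) (hab : Ioo c d ⊆ ooE a b) : 0 < ∫ t in s, p t := by
  rw [setIntegral_pos_iff_support_of_nonneg_ae (ae_of_all _ h1.nonneg)
    h1.integrable.integrableOn]
  refine (Real.volume_Ioo ▸ ENNReal.ofReal_pos.2 (sub_pos.2 hcd)).trans_le
    (measure_mono fun t ht => ⟨(h1.pos t (hab ht)).ne', hs ht⟩)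

lemma integrable_sub_meanOf_mul (h1 : Cond1 a b p) (hint : Integrable fun x => h x * p x) :
    Integrable fun t => (h t - meanOf p h) * p t := by
  simpa only [sub_mul] using Integrable.sub' hint (h1.integrable.const_mul (meanOf p h))

lemma integral_sub_meanOf_mul (h1 : Cond1 a b p) (hint : Integrable fun x => h x * p x) :
    ∫ t, (h t - meanOf p h) * p t = 0 := by
  simp only [sub_mul]
  rw [integral_sub hint (h1.integrable.const_mul _), integral_const_mul, h1.total, mul_one,
    meanOf, sub_self]

lemma Ifun_eq_zero_of_nonneg_on (h1 : Cond1 a b p) (h2 : Cond2 a b p γ)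
    (hγ : ∀ t ∈ ooE a b, 0 ≤ γ t) (x : ℝ) : Ifun γ p x = 0 := by
  refine setIntegral_eq_zero_of_nonneg_of_integral_eq_zero (fun t => ?_) h2.integrable
    h2.mean_zero _
  by_cases ht : t ∈ ooE a b
  · exact mul_nonneg (hγ t ht) (h1.nonneg t)
  · rw [h1.zero t ht, mul_zero]

lemma Ifun_eq_zero_of_nonpos_on (h1 : Cond1 a b p) (h2 : Cond2 a b p γ)
    (hγ : ∀ t ∈ ooE a b, γ t ≤ 0) (x : ℝ) : Ifun γ p x = 0 := by
  have hneg := setIntegral_eq_zero_of_nonneg_of_integral_eq_zero (f := fun t => -(γ t * p t))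
    (fun t => ?_) h2.integrable.neg (by rw [integral_neg, h2.mean_zero, neg_zero]) (Iic x)
  · rwa [integral_neg, neg_eq_zero] at hneg
  by_cases ht : t ∈ ooE a b
  · exact neg_nonneg.2 (mul_nonpos_of_nonpos_of_nonneg (hγ t ht) (h1.nonneg t))
  · rw [h1.zero t ht, mul_zero, neg_zero]

end Cond1

theorem tendsto_gsol_nhdsGT {a₀ hA γA : ℝ} (h1 : Cond1 a₀ b p) (h2 : Cond2 a₀ b p γ)
    (hint : Integrable fun x => h x * p x) (hh : Tendsto h (𝓝[>] a₀) (𝓝 hA))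
    (hγ : Tendsto γ (𝓝[>] a₀) (𝓝 γA)) :
    Tendsto (gsol γ p h) (𝓝[>] a₀) (𝓝 ((hA - meanOf p h) / γA)) := by
  rcases eq_or_ne γA 0 with rfl | hγA
  · rw [gsol_eq_zero_of_Ifun_eq_zero (h1.Ifun_eq_zero_of_nonpos_on h2 fun t ht =>
      h2.anti.le_of_tendsto_nhdsGT hγ (ooE_subset_ccE ht)
        (ooE_subset_ccE.trans' (Ioo_subset_ooE le_rfl ht.2.le))
        (EReal.coe_lt_coe_iff.1 ht.1)), div_zero]
    exact tendsto_const_nhds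
  obtain ⟨r, har, hrb⟩ := EReal.lt_iff_exists_real_btwn.1 h1.lt
  have hx : ∀ᶠ x in 𝓝[>] a₀, x ∈ Ioo a₀ r := Ioo_mem_nhdsGT (EReal.coe_lt_coe_iff.1 har)
  have hpos : ∀ᶠ x in 𝓝[>] a₀, 0 < ∫ t in Ioc a₀ x, p t := hx.mono fun x hx =>
    h1.setIntegral_pos hx.1 Ioo_subset_Ioc_self
      (Ioo_subset_ooE le_rfl ((EReal.coe_lt_coe_iff.2 hx.2).trans hrb).le)
  refine (tendsto_setIntegral_div_setIntegral (tendsto_Ioc_nhdsGT_smallSets a₀)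
    (fun _ => measurableSet_Ioc) (hh.sub_const _) hγ hγA h1.integrable
    (h1.integrable_sub_meanOf_mul hint) h2.integrable h1.nonneg hpos).congr'
    (hx.mono fun x hx => ?_)
  have hxb : (x : EReal) < b := (EReal.coe_lt_coe_iff.2 hx.2).trans hrb
  rw [gsol_eq_div_Ifun (h1.pos x ⟨EReal.coe_lt_coe_iff.2 hx.1, hxb⟩).ne', Ifun,
    h1.setIntegral_mul_eq_inter_ooE _ measurableSet_Iic,
    h1.setIntegral_mul_eq_inter_ooE _ measurableSet_Iic, Iic_inter_ooE_coe hxb]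

theorem tendsto_gsol_nhdsLT {b₀ hB γB : ℝ} (h1 : Cond1 a b₀ p) (h2 : Cond2 a b₀ p γ)
    (hint : Integrable fun x => h x * p x) (hh : Tendsto h (𝓝[<] b₀) (𝓝 hB))
    (hγ : Tendsto γ (𝓝[<] b₀) (𝓝 γB)) :
    Tendsto (gsol γ p h) (𝓝[<] b₀) (𝓝 ((hB - meanOf p h) / γB)) := by
  rcases eq_or_ne γB 0 with rfl | hγB
  · rw [gsol_eq_zero_of_Ifun_eq_zero (h1.Ifun_eq_zero_of_nonneg_on h2 fun t ht =>
      h2.anti.le_of_tendsto_nhdsLT hγ (ooE_subset_ccE ht)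
        (ooE_subset_ccE.trans' (Ioo_subset_ooE ht.1.le le_rfl))
        (EReal.coe_lt_coe_iff.1 ht.2)), div_zero]
    exact tendsto_const_nhds
  obtain ⟨r, har, hrb⟩ := EReal.lt_iff_exists_real_btwn.1 h1.lt
  have hx : ∀ᶠ x in 𝓝[<] b₀, x ∈ Ioo r b₀ := Ioo_mem_nhdsLT (EReal.coe_lt_coe_iff.1 hrb)
  have hpos : ∀ᶠ x in 𝓝[<] b₀, 0 < ∫ t in Ioo x b₀, p t := hx.mono fun x hx =>
    h1.setIntegral_pos hx.2 subset_rfl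
      (Ioo_subset_ooE (har.trans (EReal.coe_lt_coe_iff.2 hx.1)).le le_rfl)
  refine (tendsto_setIntegral_div_setIntegral (tendsto_Ioo_nhdsLT_smallSets b₀)
    (fun _ => measurableSet_Ioo) (hh.sub_const _) hγ hγB h1.integrable
    (h1.integrable_sub_meanOf_mul hint) h2.integrable h1.nonneg hpos).congr'
    (hx.mono fun x hx => ?_)
  have hax : a < x := har.trans (EReal.coe_lt_coe_iff.2 hx.1)
  rw [gsol_eq_div_Ifun (h1.pos x ⟨hax, EReal.coe_lt_coe_iff.2 hx.2⟩).ne', Ifun,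
    setIntegral_Iic_eq_neg_setIntegral_Ioi (h1.integrable_sub_meanOf_mul hint)
      (h1.integral_sub_meanOf_mul hint),
    setIntegral_Iic_eq_neg_setIntegral_Ioi h2.integrable h2.mean_zero, neg_div_neg_eq,
    h1.setIntegral_mul_eq_inter_ooE _ measurableSet_Ioi,
    h1.setIntegral_mul_eq_inter_ooE _ measurableSet_Ioi, Ioi_inter_ooE_coe hax]

end SteinSolution

theorem prop_gsol_boundary_general (a b : EReal) (p γ h : ℝ → ℝ)
    (h1 : Cond1 a b p) (h2 : Cond2 a b p γ)
    (hint : MeasureTheory.Integrable (fun x => h x * p x)) :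
    (∀ hA γA : ℝ, a ≠ ⊥ →
      Tendsto h (nhdsGT a) (𝓝 hA) → Tendsto γ (nhdsGT a) (𝓝 γA) →
      Tendsto (gsol γ p h) (nhdsGT a) (𝓝 ((hA - meanOf p h) / γA))) ∧
    (∀ hB γB : ℝ, b ≠ ⊤ →
      Tendsto h (nhdsLT b) (𝓝 hB) → Tendsto γ (nhdsLT b) (𝓝 γB) →
      Tendsto (gsol γ p h) (nhdsLT b) (𝓝 ((hB - meanOf p h) / γB))) := by
  refine ⟨fun hA γA ha hh hγ => ?_, fun hB γB hb hh hγ => ?_⟩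
  · induction a using EReal.rec with
    | bot => exact absurd rfl ha
    | coe a₀ =>
      rw [nhdsGT_coe] at hh hγ ⊢
      exact tendsto_gsol_nhdsGT h1 h2 hint hh hγ
    | top => exact absurd h1.lt not_top_lt
  · induction b using EReal.rec with
    | bot => exact absurd h1.lt not_lt_bot
    | coe b₀ =>
      rw [nhdsLT_coe] at hh hγ ⊢
      exact tendsto_gsol_nhdsLT h1 h2 hint hh hγ
    | top => exact absurd rfl hb

/-- Boundary behaviour of the standard solution `g_h`: at a finite endpoint where `h` has a
one-sided limit, `g_h` tends to `(h(a+) - E[h(Z)])/γ(a+)`, resp. `(h(b-) - E[h(Z)])/γ(b-)`,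
and hence extends continuously. -/
theorem prop_gsol_boundary (a b : EReal) (p γ h : ℝ → ℝ)
    (h1 : Cond1 a b p) (h2 : Cond2 a b p γ)
    (hmeas : Measurable h) (hint : MeasureTheory.Integrable (fun x => h x * p x)) :
    (∀ hA γA : ℝ, a ≠ ⊥ →
      Tendsto h (nhdsGT a) (𝓝 hA) → Tendsto γ (nhdsGT a) (𝓝 γA) →
      Tendsto (gsol γ p h) (nhdsGT a) (𝓝 ((hA - meanOf p h) / γA))) ∧
    (∀ hB γB : ℝ, b ≠ ⊤ →
      Tendsto h (nhdsLT b) (𝓝 hB) → Tendsto γ (nhdsLT b) (𝓝 γB) →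
      Tendsto (gsol γ p h) (nhdsLT b) (𝓝 ((hB - meanOf p h) / γB))) :=
  prop_gsol_boundary_general a b p γ h h1 h2 hint

end
end

section
/- Assume Conditions 1 and 2 and let m be the median of the law of Z. Then for every bounded Borel-measurable function h on the closure of (a,b), the standard solution g_h satisfies ‖g_h‖ ≤ ‖h − E[h(Z)]‖ / (2 I(m)) = ‖h − E[h(Z)]‖ / (2 ∫_a^m γ(t)p(t) dt). -/
open MeasureTheory Set Filter Topology

noncomputable section

/-- Bound on the standard solution for bounded measurable test functions:
`‖g_h‖ ≤ ‖h - E[h(Z)]‖ / (2 I(m))` where `m` is the median of `Z`. -/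
theorem prop_gsol_bounded_bound (a b : EReal) (p γ h : ℝ → ℝ) (m : ℝ)
    (h1 : Cond1 a b p) (h2 : Cond2 a b p γ)
    (hmeas : Measurable h)
    (hm : m ∈ ooE a b) (hmed : Ffun p m = 1 / 2)
    (M : ℝ) (hbd : ∀ x ∈ ccE a b, |h x - meanOf p h| ≤ M) :
    ∀ x ∈ ooE a b, |gsol γ p h x| ≤ M / (2 * Ifun γ p m) := by
  have hoocc : ooE a b ⊆ ccE a b := fun x hx => ⟨le_of_lt hx.1, le_of_lt hx.2⟩
  set μ := meanOf p h with hμdef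
  have hM : 0 ≤ M := le_trans (abs_nonneg _) (hbd m (hoocc hm))
  have hpz : ∀ t, p t = 0 ∨ t ∈ ooE a b := by
    intro t
    by_cases ht : t ∈ ooE a b
    · exact Or.inr ht
    · exact Or.inl (h1.zero t ht)
  -- integrability of h * p and (h - μ) * p
  have hhp : Integrable (fun t => h t * p t) := by
    refine Integrable.mono (h1.integrable.const_mul (M + |μ|))
      ((hmeas.mul h1.meas).aestronglyMeasurable) (Eventually.of_forall fun t => ?_)
    rcases hpz t with h0 | ht
    · simp [h0]
    · have hb := hbd t (hoocc ht)
      have hpt := h1.nonneg t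
      have hht : |h t| ≤ M + |μ| := by
        have : |h t| = |(h t - μ) + μ| := by ring_nf
        rw [this]
        exact le_trans (abs_add_le _ _) (by linarith)
      have h1' : 0 ≤ M + |μ| := by positivity
      rw [Real.norm_eq_abs, Real.norm_eq_abs, abs_mul, abs_mul, abs_of_nonneg hpt,
        abs_of_nonneg h1']
      exact mul_le_mul_of_nonneg_right hht hpt
  have hq : Integrable (fun t => (h t - μ) * p t) := by
    have heq : (fun t => (h t - μ) * p t) = fun t => h t * p t - μ * p t := by
      funext t; ring
    rw [heq]
    exact hhp.sub (h1.integrable.const_mul μ)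
  have hqabs : ∀ t, |(h t - μ) * p t| ≤ M * p t := by
    intro t
    rcases hpz t with h0 | ht
    · simp [h0]
    · rw [abs_mul, abs_of_nonneg (h1.nonneg t)]
      exact mul_le_mul_of_nonneg_right (hbd t (hoocc ht)) (h1.nonneg t)
  have hq0 : ∫ t, (h t - μ) * p t = 0 := by
    have heq : ∫ t, (h t - μ) * p t = (∫ t, h t * p t) - ∫ t, μ * p t := by
      rw [← integral_sub hhp (h1.integrable.const_mul μ)]
      congr 1; funext t; ring
    rw [heq, integral_const_mul, h1.total, hμdef, meanOf]
    ring
  -- splitting integrals at a point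
  have hsplit : ∀ (f : ℝ → ℝ), Integrable f → ∀ x : ℝ,
      (∫ t in Iic x, f t) + (∫ t in Ioi x, f t) = ∫ t, f t := by
    intro f hf x
    rw [← compl_Iic]
    exact integral_add_compl measurableSet_Iic hf
  -- F basic
  have hGdef : ∀ x : ℝ, Ffun p x + (∫ t in Ioi x, p t) = 1 := by
    intro x
    have := hsplit p h1.integrable x
    rwa [h1.total] at this
  have hFnonneg : ∀ x : ℝ, 0 ≤ Ffun p x :=
    fun x => setIntegral_nonneg measurableSet_Iic (fun t _ => h1.nonneg t)
  have hGnonneg : ∀ x : ℝ, 0 ≤ ∫ t in Ioi x, p t :=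
    fun x => setIntegral_nonneg measurableSet_Ioi (fun t _ => h1.nonneg t)
  have hIoopos : ∀ u v : ℝ, u < v → Ioo u v ⊆ ooE a b → 0 < ∫ t in Ioo u v, p t := by
    intro u v huv hsub
    rw [setIntegral_pos_iff_support_of_nonneg_ae
      (Eventually.of_forall fun t => h1.nonneg t) h1.integrable.integrableOn]
    have : Function.support p ∩ Ioo u v = Ioo u v := by
      apply Set.inter_eq_self_of_subset_right
      intro t ht
      exact (h1.pos t (hsub ht)).ne'
    rw [this, Real.volume_Ioo]
    simp [huv]
  have hFpos : ∀ x ∈ ooE a b, 0 < Ffun p x := by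
    intro x hx
    obtain ⟨a', ha1, ha2⟩ := EReal.exists_between_coe_real hx.1
    have ha2' : a' < x := EReal.coe_lt_coe_iff.mp ha2
    have hsub : Ioo a' x ⊆ ooE a b := fun t ht =>
      ⟨lt_trans ha1 (EReal.coe_lt_coe_iff.mpr ht.1),
       lt_trans (EReal.coe_lt_coe_iff.mpr ht.2) hx.2⟩
    have h0 := hIoopos a' x ha2' hsub
    have hle : (∫ t in Ioo a' x, p t) ≤ Ffun p x :=
      setIntegral_mono_set h1.integrable.integrableOn
        (Eventually.of_forall fun t => h1.nonneg t)
        (HasSubset.Subset.eventuallyLE (fun t ht => le_of_lt ht.2))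
    linarith
  have hGpos : ∀ x ∈ ooE a b, 0 < ∫ t in Ioi x, p t := by
    intro x hx
    obtain ⟨b', hb1, hb2⟩ := EReal.exists_between_coe_real hx.2
    have hb1' : x < b' := EReal.coe_lt_coe_iff.mp hb1
    have hsub : Ioo x b' ⊆ ooE a b := fun t ht =>
      ⟨lt_trans hx.1 (EReal.coe_lt_coe_iff.mpr ht.1),
       lt_trans (EReal.coe_lt_coe_iff.mpr ht.2) hb2⟩
    have h0 := hIoopos x b' hb1' hsub
    have hle : (∫ t in Ioo x b', p t) ≤ ∫ t in Ioi x, p t :=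
      setIntegral_mono_set h1.integrable.integrableOn
        (Eventually.of_forall fun t => h1.nonneg t)
        (HasSubset.Subset.eventuallyLE (fun t ht => ht.1))
    linarith
  -- pointwise monotone comparisons
  have hγle : ∀ x ∈ ccE a b, ∀ t, t ≤ x → γ x * p t ≤ γ t * p t := by
    intro x hx t ht
    rcases hpz t with h0 | hto
    · simp [h0]
    · exact mul_le_mul_of_nonneg_right (h2.anti (hoocc hto) hx ht) (h1.nonneg t)
  have hγge : ∀ x ∈ ccE a b, ∀ t, x ≤ t → γ t * p t ≤ γ x * p t := by
    intro x hx t ht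
    rcases hpz t with h0 | hto
    · simp [h0]
    · exact mul_le_mul_of_nonneg_right (h2.anti hx (hoocc hto) ht) (h1.nonneg t)
  -- integral comparisons
  have hIicLow : ∀ x ∈ ccE a b, γ x * Ffun p x ≤ Ifun γ p x := by
    intro x hx
    rw [Ffun, Ifun, ← integral_const_mul]
    exact setIntegral_mono_on ((h1.integrable.const_mul (γ x)).integrableOn)
      h2.integrable.integrableOn measurableSet_Iic (fun t ht => hγle x hx t ht)
  have hIoiHigh : ∀ x ∈ ccE a b,
      (∫ t in Ioi x, γ t * p t) ≤ γ x * ∫ t in Ioi x, p t := by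
    intro x hx
    rw [← integral_const_mul]
    exact setIntegral_mono_on h2.integrable.integrableOn
      ((h1.integrable.const_mul (γ x)).integrableOn)
      measurableSet_Ioi (fun t ht => hγge x hx t (le_of_lt ht))
  -- N bounds
  have hN1 : ∀ x : ℝ, |∫ t in Iic x, (h t - μ) * p t| ≤ M * Ffun p x := by
    intro x
    calc |∫ t in Iic x, (h t - μ) * p t| ≤ ∫ t in Iic x, |(h t - μ) * p t| := by
          simpa [Real.norm_eq_abs, abs_mul] using
            norm_integral_le_integral_norm (μ := volume.restrict (Iic x))
              (fun t => (h t - μ) * p t)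
      _ ≤ ∫ t in Iic x, M * p t :=
          setIntegral_mono_on hq.abs.integrableOn
            ((h1.integrable.const_mul M).integrableOn) measurableSet_Iic
            (fun t _ => hqabs t)
      _ = M * Ffun p x := integral_const_mul M p
  have hN2 : ∀ x : ℝ, |∫ t in Iic x, (h t - μ) * p t| ≤ M * ∫ t in Ioi x, p t := by
    intro x
    have hs := hsplit _ hq x
    rw [hq0] at hs
    have heq : (∫ t in Iic x, (h t - μ) * p t)
        = -(∫ t in Ioi x, (h t - μ) * p t) := by linarith
    rw [heq, abs_neg]
    calc |∫ t in Ioi x, (h t - μ) * p t| ≤ ∫ t in Ioi x, |(h t - μ) * p t| := by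
          simpa [Real.norm_eq_abs, abs_mul] using
            norm_integral_le_integral_norm (μ := volume.restrict (Ioi x))
              (fun t => (h t - μ) * p t)
      _ ≤ ∫ t in Ioi x, M * p t :=
          setIntegral_mono_on hq.abs.integrableOn
            ((h1.integrable.const_mul M).integrableOn) measurableSet_Ioi
            (fun t _ => hqabs t)
      _ = M * ∫ t in Ioi x, p t := integral_const_mul M p
  -- key inequality A : for x ≤ m
  have keyA : ∀ x ∈ ooE a b, x ≤ m →
      Ifun γ p m * Ffun p x ≤ Ifun γ p x * Ffun p m := by
    intro x hx hxm
    have hIm : Ifun γ p m = Ifun γ p x + ∫ t in Ioc x m, γ t * p t := by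
      rw [Ifun, Ifun, ← setIntegral_union (Iic_disjoint_Ioc le_rfl) measurableSet_Ioc
        h2.integrable.integrableOn h2.integrable.integrableOn,
        Iic_union_Ioc_eq_Iic hxm]
    have hFm : Ffun p m = Ffun p x + ∫ t in Ioc x m, p t := by
      rw [Ffun, Ffun, ← setIntegral_union (Iic_disjoint_Ioc le_rfl) measurableSet_Ioc
        h1.integrable.integrableOn h1.integrable.integrableOn,
        Iic_union_Ioc_eq_Iic hxm]
    set A := Ifun γ p x with hA'
    set B := ∫ t in Ioc x m, γ t * p t with hB'
    set c := Ffun p x with hc'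
    set d := ∫ t in Ioc x m, p t with hd'
    have hc : 0 ≤ c := hFnonneg x
    have hd : 0 ≤ d := setIntegral_nonneg measurableSet_Ioc (fun t _ => h1.nonneg t)
    have hA : γ x * c ≤ A := hIicLow x (hoocc hx)
    have hB : B ≤ γ x * d := by
      rw [hB', hd', ← integral_const_mul]
      exact setIntegral_mono_on h2.integrable.integrableOn
        ((h1.integrable.const_mul (γ x)).integrableOn) measurableSet_Ioc
        (fun t ht => hγge x (hoocc hx) t (le_of_lt ht.1))
    rw [hIm, hFm]
    nlinarith [mul_le_mul_of_nonneg_right hB hc, mul_le_mul_of_nonneg_right hA hd]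
  -- key inequality B : for m ≤ x
  have keyB : ∀ x ∈ ooE a b, m ≤ x →
      Ifun γ p m * (∫ t in Ioi x, p t) ≤ Ifun γ p x * ∫ t in Ioi m, p t := by
    intro x hx hmx
    have hIoim : (∫ t in Ioi m, γ t * p t)
        = (∫ t in Ioc m x, γ t * p t) + ∫ t in Ioi x, γ t * p t := by
      rw [← setIntegral_union (Ioc_disjoint_Ioi le_rfl) measurableSet_Ioi
        h2.integrable.integrableOn h2.integrable.integrableOn,
        Ioc_union_Ioi_eq_Ioi hmx]
    have hIoimp : (∫ t in Ioi m, p t)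
        = (∫ t in Ioc m x, p t) + ∫ t in Ioi x, p t := by
      rw [← setIntegral_union (Ioc_disjoint_Ioi le_rfl) measurableSet_Ioi
        h1.integrable.integrableOn h1.integrable.integrableOn,
        Ioc_union_Ioi_eq_Ioi hmx]
    have hImId : Ifun γ p m + ∫ t in Ioi m, γ t * p t = 0 := by
      have := hsplit _ h2.integrable m
      rwa [h2.mean_zero] at this
    have hIxId : Ifun γ p x + ∫ t in Ioi x, γ t * p t = 0 := by
      have := hsplit _ h2.integrable x
      rwa [h2.mean_zero] at this
    set A := ∫ t in Ioi x, γ t * p t with hA'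
    set B := ∫ t in Ioc m x, γ t * p t with hB'
    set c := ∫ t in Ioi x, p t with hc'
    set d := ∫ t in Ioc m x, p t with hd'
    have hc : 0 ≤ c := hGnonneg x
    have hd : 0 ≤ d := setIntegral_nonneg measurableSet_Ioc (fun t _ => h1.nonneg t)
    have hA : A ≤ γ x * c := hIoiHigh x (hoocc hx)
    have hB : γ x * d ≤ B := by
      rw [hB', hd', ← integral_const_mul]
      exact setIntegral_mono_on ((h1.integrable.const_mul (γ x)).integrableOn)
        h2.integrable.integrableOn measurableSet_Ioc
        (fun t ht => hγle x (hoocc hx) t ht.2)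
    have hIm : Ifun γ p m = -(B + A) := by rw [hIoim] at hImId; linarith
    have hIx : Ifun γ p x = -A := by linarith
    rw [hIm, hIx, hIoimp]
    nlinarith [mul_le_mul_of_nonneg_right hA hd, mul_le_mul_of_nonneg_right hB hc]
  -- I m ≥ 0
  have hGm : (∫ t in Ioi m, p t) = 1 / 2 := by
    have := hGdef m
    rw [hmed] at this
    linarith
  have hIm0 : 0 ≤ Ifun γ p m := by
    rcases le_or_gt 0 (γ m) with hγm | hγm
    · have := hIicLow m (hoocc hm)
      rw [hmed] at this
      nlinarith
    · have h3 := hIoiHigh m (hoocc hm)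
      have hImId : Ifun γ p m + ∫ t in Ioi m, γ t * p t = 0 := by
        have := hsplit _ h2.integrable m
        rwa [h2.mean_zero] at this
      rw [hGm] at h3
      nlinarith
  rcases eq_or_lt_of_le hIm0 with hImz | hImpos
  · -- degenerate case : I m = 0, show γ p = 0 a.e.
    have hImz' : Ifun γ p m = 0 := hImz.symm
    have hImId : Ifun γ p m + ∫ t in Ioi m, γ t * p t = 0 := by
      have := hsplit _ h2.integrable m
      rwa [h2.mean_zero] at this
    have hIoimz : (∫ t in Ioi m, γ t * p t) = 0 := by linarith
    have hγm : 0 ≤ γ m := by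
      by_contra hneg
      push_neg at hneg
      have h3 := hIoiHigh m (hoocc hm)
      rw [hGm, hIoimz] at h3
      nlinarith
    -- γ p ≥ 0 on Iic m, integral 0 ⇒ a.e. zero there
    have hnn : ∀ t ∈ Iic m, 0 ≤ γ t * p t := by
      intro t ht
      rcases hpz t with h0 | hto
      · simp [h0]
      · have : γ m ≤ γ t := h2.anti (hoocc hto) (hoocc hm) ht
        have := le_trans hγm this
        exact mul_nonneg this (h1.nonneg t)
    have hae1 : ∀ᵐ t, t ∈ Iic m → γ t * p t = 0 := by
      have hz : (fun t => γ t * p t) =ᵐ[volume.restrict (Iic m)] 0 := by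
        rw [← integral_eq_zero_iff_of_nonneg_ae
          ((ae_restrict_iff' measurableSet_Iic).mpr (Eventually.of_forall hnn))
          h2.integrable.integrableOn]
        exact hImz'
      exact (ae_restrict_iff' measurableSet_Iic).mp hz
    -- pick s < m with γ s = 0
    obtain ⟨a', ha1, ha2⟩ := EReal.exists_between_coe_real hm.1
    have ha2' : a' < m := EReal.coe_lt_coe_iff.mp ha2
    have hsm : ∃ s ∈ Ioo a' m, γ s = 0 := by
      set E := {t : ℝ | ¬ (t ∈ Iic m → γ t * p t = 0)} with hE
      have hEnull : volume E = 0 := hae1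
      have hpos : volume (Ioo a' m \ E) ≠ 0 := by
        rw [measure_diff_null hEnull, Real.volume_Ioo]
        simp [ha2']
      obtain ⟨s, hs⟩ := nonempty_of_measure_ne_zero hpos
      refine ⟨s, hs.1, ?_⟩
      have hsz : γ s * p s = 0 := by
        by_contra hc
        exact hs.2 (fun h' => hc (h' (le_of_lt hs.1.2)))
      have hso : s ∈ ooE a b :=
        ⟨lt_trans ha1 (EReal.coe_lt_coe_iff.mpr hs.1.1),
         lt_trans (EReal.coe_lt_coe_iff.mpr hs.1.2) hm.2⟩
      rcases mul_eq_zero.mp hsz with h' | h'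
      · exact h'
      · exact absurd h' (h1.pos s hso).ne'
    obtain ⟨s, hsIoo, hsγ⟩ := hsm
    have hso : s ∈ ooE a b :=
      ⟨lt_trans ha1 (EReal.coe_lt_coe_iff.mpr hsIoo.1),
       lt_trans (EReal.coe_lt_coe_iff.mpr hsIoo.2) hm.2⟩
    -- γ p ≤ 0 on Ioi m
    have hnp : ∀ t ∈ Ioi m, γ t * p t ≤ 0 := by
      intro t ht
      rcases hpz t with h0 | hto
      · simp [h0]
      · have hst : s ≤ t := le_of_lt (lt_trans hsIoo.2 ht)
        have : γ t ≤ γ s := h2.anti (hoocc hso) (hoocc hto) hst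
        rw [hsγ] at this
        exact mul_nonpos_of_nonpos_of_nonneg this (h1.nonneg t)
    have hae2 : ∀ᵐ t, t ∈ Ioi m → γ t * p t = 0 := by
      have hz : (fun t => -(γ t * p t)) =ᵐ[volume.restrict (Ioi m)] 0 := by
        rw [← integral_eq_zero_iff_of_nonneg_ae
          ((ae_restrict_iff' measurableSet_Ioi).mpr
            (Eventually.of_forall (fun t ht => neg_nonneg.mpr (hnp t ht))))
          h2.integrable.integrableOn.neg]
        rw [integral_neg, hIoimz, neg_zero]
      have := (ae_restrict_iff' measurableSet_Ioi).mp hz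
      filter_upwards [this] with t ht hmt
      have := ht hmt
      simpa using this
    have haez : ∀ᵐ t, γ t * p t = 0 := by
      filter_upwards [hae1, hae2] with t ht1 ht2
      rcases le_or_gt t m with hc | hc
      · exact ht1 hc
      · exact ht2 hc
    have hIallz : ∀ x : ℝ, Ifun γ p x = 0 := by
      intro x
      rw [Ifun]
      exact integral_eq_zero_of_ae (ae_restrict_of_ae haez)
    intro x hx
    rw [gsol, etaFun, hIallz x, hIallz m]
    simp
  · -- main case : I m > 0
    intro x hx
    have hpx : p x ≠ 0 := (h1.pos x hx).ne'
    have hdenom : p x * etaFun γ p x = Ifun γ p x := by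
      rw [etaFun]
      field_simp
    rw [gsol, hdenom]
    have h2Im : 0 < 2 * Ifun γ p m := by linarith
    rcases le_total x m with hxm | hmx
    · have hkA := keyA x hx hxm
      rw [hmed] at hkA
      have hFx := hFpos x hx
      have hIx : 0 < Ifun γ p x := by nlinarith
      rw [abs_div, abs_of_pos hIx, div_le_div_iff₀ hIx h2Im]
      have hN := hN1 x
      nlinarith [mul_le_mul_of_nonneg_right hN (le_of_lt h2Im),
        mul_le_mul_of_nonneg_left hkA (by linarith : (0:ℝ) ≤ 2 * M)]
    · have hkB := keyB x hx hmx
      rw [hGm] at hkB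
      have hGx := hGpos x hx
      have hIx : 0 < Ifun γ p x := by nlinarith
      rw [abs_div, abs_of_pos hIx, div_le_div_iff₀ hIx h2Im]
      have hN := hN2 x
      nlinarith [mul_le_mul_of_nonneg_right hN (le_of_lt h2Im),
        mul_le_mul_of_nonneg_left hkB (by linarith : (0:ℝ) ≤ 2 * M)]

end
end

section
/- In addition to Conditions 1 and 2, assume that E|Z| < ∞, that the law of Z is symmetric with respect to m = E[Z] (i.e. Z − E[Z] and E[Z] − Z have the same distribution), and that γ(x) = −c(x − E[Z]) for some constant c > 0. Then for every bounded Borel-measurable function h on the closure of (a,b), the standard solution g_h satisfies ‖g_h‖ ≤ ‖h − E[h(Z)]‖ / (c·E[|Z − m|]). -/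
open MeasureTheory Set Filter Topology

set_option maxHeartbeats 1000000

noncomputable section

private lemma aux_setIntegral_pos {p : ℝ → ℝ} (hp : MeasureTheory.Integrable p)
    (hnn : ∀ x, 0 ≤ p x) {s : Set ℝ} (hs : MeasurableSet s) {u v : ℝ} (huv : u < v)
    (hsub : Ioo u v ⊆ s) (hpos : ∀ t ∈ Ioo u v, 0 < p t) : 0 < ∫ t in s, p t := by
  have h1 : 0 < ∫ t in Ioo u v, p t := by
    rw [setIntegral_pos_iff_support_of_nonneg_ae
      (Eventually.of_forall fun t => hnn t) hp.integrableOn]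
    have hss : Ioo u v ⊆ Function.support p ∩ Ioo u v := fun t ht =>
      ⟨fun h0 => (hpos t ht).ne' h0, ht⟩
    calc (0:ENNReal) < volume (Ioo u v) := by
          rw [Real.volume_Ioo]; exact ENNReal.ofReal_pos.mpr (by linarith)
      _ ≤ volume (Function.support p ∩ Ioo u v) := measure_mono hss
  calc (0:ℝ) < ∫ t in Ioo u v, p t := h1
    _ ≤ ∫ t in s, p t := setIntegral_mono_set hp.integrableOn
        (Eventually.of_forall fun t => hnn t) (HasSubset.Subset.eventuallyLE hsub)

/-- If the law of `Z` is symmetric about `m = E[Z]` and `γ(x) = -c(x - E[Z])` for some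
`c > 0`, then `‖g_h‖ ≤ ‖h - E[h(Z)]‖ / (c E|Z - m|)` for bounded measurable `h`. -/
theorem cor_gsol_bounded_symmetric (a b : EReal) (p h : ℝ → ℝ) (c : ℝ) (hc : 0 < c)
    (h1 : Cond1 a b p)
    (hmom : MeasureTheory.Integrable (fun x => x * p x))
    (hsym : (volume.withDensity (fun x => ENNReal.ofReal (p x))).map
        (fun x => 2 * (∫ y, y * p y) - x)
      = volume.withDensity (fun x => ENNReal.ofReal (p x)))
    (h2 : Cond2 a b p (fun x => -c * (x - ∫ y, y * p y)))
    (hmeas : Measurable h)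
    (M : ℝ) (hbd : ∀ x ∈ ccE a b, |h x - meanOf p h| ≤ M) :
    ∀ x ∈ ooE a b,
      |gsol (fun x => -c * (x - ∫ y, y * p y)) p h x| ≤
        M / (c * ∫ y, |y - ∫ z, z * p z| * p y) := by
  intro x hx
  set m : ℝ := ∫ y, y * p y with hm_def
  set D : ℝ := ∫ y, |y - m| * p y with hD_def
  have hnn := h1.nonneg
  have hccE : ooE a b ⊆ ccE a b := fun t ht => ⟨le_of_lt ht.1, le_of_lt ht.2⟩
  have hpzero : ∀ t, t ∉ ccE a b → p t = 0 := fun t ht => h1.zero t fun hm => ht (hccE hm)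
  have hM0 : 0 ≤ M := le_trans (abs_nonneg _) (hbd x (hccE hx))
  -- pointwise bounds
  have hptw : ∀ t, |(h t - meanOf p h) * p t| ≤ M * p t := by
    intro t
    rw [abs_mul, abs_of_nonneg (hnn t)]
    by_cases ht : t ∈ ccE a b
    · exact mul_le_mul_of_nonneg_right (hbd t ht) (hnn t)
    · rw [hpzero t ht]; simp
  have hhtw : ∀ t, |h t * p t| ≤ (M + |meanOf p h|) * p t := by
    intro t
    rw [abs_mul, abs_of_nonneg (hnn t)]
    by_cases ht : t ∈ ccE a b
    · refine mul_le_mul_of_nonneg_right ?_ (hnn t)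
      calc |h t| = |(h t - meanOf p h) + meanOf p h| := by ring_nf
        _ ≤ |h t - meanOf p h| + |meanOf p h| := abs_add_le _ _
        _ ≤ M + |meanOf p h| := by linarith [hbd t ht]
    · rw [hpzero t ht]; simp
  -- integrability
  have hmp : Integrable (fun t => m * p t) := h1.integrable.const_mul m
  have hq_int : Integrable (fun t => (m - t) * p t) :=
    (hmp.sub hmom).congr (Eventually.of_forall fun t => by simp only [Pi.sub_apply]; ring)
  have htm_int : Integrable (fun t => (t - m) * p t) :=
    (hmom.sub hmp).congr (Eventually.of_forall fun t => by simp only [Pi.sub_apply]; ring)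
  have hD_int : Integrable (fun t => |t - m| * p t) := by
    have : (fun t => |t - m| * p t) = fun t => |(t - m) * p t| :=
      funext fun t => by rw [abs_mul, abs_of_nonneg (hnn t)]
    rw [this]; exact htm_int.abs
  have hh_int : Integrable (fun t => h t * p t) := by
    refine Integrable.mono' (h1.integrable.const_mul (M + |meanOf p h|))
      ((hmeas.mul h1.meas).aestronglyMeasurable) (Eventually.of_forall fun t => ?_)
    simpa only [Real.norm_eq_abs] using hhtw t
  have hg_int : Integrable (fun t => (h t - meanOf p h) * p t) :=
    (hh_int.sub (h1.integrable.const_mul (meanOf p h))).congr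
      (Eventually.of_forall fun t => by simp only [Pi.sub_apply]; ring)
  -- total integrals
  have hg_total : ∫ t, (h t - meanOf p h) * p t = 0 := by
    have heq : ∫ t, (h t - meanOf p h) * p t
        = ∫ t, (h t * p t - meanOf p h * p t) := by congr 1; funext t; ring
    rw [heq, integral_sub hh_int (h1.integrable.const_mul _), integral_const_mul, h1.total]
    simp [meanOf]
  have hq_total : ∫ t, (m - t) * p t = 0 := by
    have heq : ∫ t, (m - t) * p t = ∫ t, (m * p t - t * p t) := by congr 1; funext t; ring
    rw [heq, integral_sub hmp hmom, integral_const_mul, h1.total, ← hm_def]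
    ring
  -- splitting
  have hsplit : ∀ f : ℝ → ℝ, Integrable f → ∀ y : ℝ,
      (∫ t in Iic y, f t) + ∫ t in Ioi y, f t = ∫ t, f t := fun f hf y =>
    intervalIntegral.integral_Iic_add_Ioi hf.integrableOn hf.integrableOn
  -- positivity of tails of F
  have hF1pos : ∀ y ∈ ooE a b, 0 < ∫ t in Iic y, p t := by
    intro y hy
    obtain ⟨u, hu1, hu2⟩ := EReal.exists_between_coe_real hy.1
    have huv : u < y := by exact_mod_cast hu2
    exact aux_setIntegral_pos h1.integrable hnn measurableSet_Iic huv
      (fun t ht => le_of_lt ht.2)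
      (fun t ht => h1.pos t ⟨lt_trans hu1 (by exact_mod_cast ht.1),
        lt_trans (by exact_mod_cast ht.2) hy.2⟩)
  have hF2pos : ∀ y ∈ ooE a b, 0 < ∫ t in Ioi y, p t := by
    intro y hy
    obtain ⟨v, hv1, hv2⟩ := EReal.exists_between_coe_real hy.2
    have huv : y < v := by exact_mod_cast hv1
    exact aux_setIntegral_pos h1.integrable hnn measurableSet_Ioi huv
      (fun t ht => ht.1)
      (fun t ht => h1.pos t ⟨lt_trans hy.1 (by exact_mod_cast ht.1),
        lt_trans (by exact_mod_cast ht.2) hv2⟩)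
  -- measure identity
  have hkey_meas : ∀ s : Set ℝ, MeasurableSet s →
      (volume.withDensity fun t => ENNReal.ofReal (p t)) s = ENNReal.ofReal (∫ t in s, p t) := by
    intro s hs
    rw [withDensity_apply _ hs, ← ofReal_integral_eq_lintegral_ofReal h1.integrable.integrableOn
      (Eventually.of_forall fun t => hnn t)]
  -- symmetry : F(m) = 1/2
  have hsym' : ∫ t in Iic m, p t = ∫ t in Ioi m, p t := by
    have hφ : Measurable fun t : ℝ => 2 * m - t := measurable_const.sub measurable_id
    have h1' := congrArg (fun μ : Measure ℝ => μ (Iic m)) hsym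
    simp only [Measure.map_apply hφ measurableSet_Iic] at h1'
    have hpre : (fun t : ℝ => 2 * m - t) ⁻¹' Iic m = Ici m := by
      ext t
      simp only [Set.mem_preimage, Set.mem_Iic, Set.mem_Ici]
      constructor <;> intro hh <;> linarith
    rw [hpre, hkey_meas _ measurableSet_Ici, hkey_meas _ measurableSet_Iic,
      integral_Ici_eq_integral_Ioi] at h1'
    exact ((ENNReal.ofReal_eq_ofReal_iff
      (setIntegral_nonneg measurableSet_Ioi fun t _ => hnn t)
      (setIntegral_nonneg measurableSet_Iic fun t _ => hnn t)).mp h1').symm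
  have hsplitp := hsplit p h1.integrable m
  rw [h1.total] at hsplitp
  have hFm : ∫ t in Iic m, p t = 1/2 := by linarith
  have hFm' : ∫ t in Ioi m, p t = 1/2 := by linarith
  -- halves of D
  have hIic_eq : ∫ t in Iic m, (m - t) * p t = ∫ t in Iic m, |t - m| * p t :=
    setIntegral_congr_fun measurableSet_Iic fun t ht => by
      rw [abs_of_nonpos (by simpa using ht : t - m ≤ 0)]; ring
  have hIoi_eq : ∫ t in Ioi m, (t - m) * p t = ∫ t in Ioi m, |t - m| * p t :=
    setIntegral_congr_fun measurableSet_Ioi fun t ht => by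
      rw [abs_of_nonneg (by simp at ht; linarith : (0:ℝ) ≤ t - m)]
  have hIoi_neg : ∫ t in Ioi m, (m - t) * p t = - ∫ t in Ioi m, (t - m) * p t := by
    rw [← integral_neg]; congr 1; funext t; ring
  have hqs := hsplit _ hq_int m
  rw [hq_total] at hqs
  have hDs := hsplit _ hD_int m
  rw [← hD_def] at hDs
  have hA : ∫ t in Iic m, (m - t) * p t = D / 2 := by linarith
  have hB : ∫ t in Ioi m, (t - m) * p t = D / 2 := by linarith
  -- D > 0
  have hDpos : 0 < D := by
    obtain ⟨x₁, ha1, hb1⟩ := EReal.lt_iff_exists_real_btwn.mp h1.lt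
    obtain ⟨x₂, ha2, hb2⟩ := EReal.exists_between_coe_real hb1
    have h12 : x₁ < x₂ := by exact_mod_cast ha2
    rw [hD_def, integral_pos_iff_support_of_nonneg_ae
      (Eventually.of_forall fun t => mul_nonneg (abs_nonneg _) (hnn t)) hD_int]
    have hsub : Ioo x₁ x₂ \ {m} ⊆ Function.support fun t => |t - m| * p t := by
      rintro t ⟨ht, htm⟩
      have hp : 0 < p t := h1.pos t ⟨lt_trans ha1 (by exact_mod_cast ht.1),
        lt_trans (by exact_mod_cast ht.2) hb2⟩
      have htm' : t ≠ m := by simpa using htm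
      exact ne_of_gt (mul_pos (abs_pos.mpr (sub_ne_zero.mpr htm')) hp)
    calc (0:ENNReal) < volume (Ioo x₁ x₂ \ {m}) := by
          rw [measure_diff_null (measure_singleton m), Real.volume_Ioo]
          exact ENNReal.ofReal_pos.mpr (by linarith)
      _ ≤ _ := measure_mono hsub
  -- key inequalities
  have hJ_int : Integrable (fun t => (m - t - D) * p t) :=
    (hq_int.sub (h1.integrable.const_mul D)).congr (Eventually.of_forall fun t => by simp only [Pi.sub_apply]; ring)
  have hK_int : Integrable (fun t => (t - m - D) * p t) :=
    (htm_int.sub (h1.integrable.const_mul D)).congr (Eventually.of_forall fun t => by simp only [Pi.sub_apply]; ring)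
  have hkeyL : ∀ y, y ≤ m → D * (∫ t in Iic y, p t) ≤ ∫ t in Iic y, (m - t) * p t := by
    intro y hy
    have hJ : ∀ z : ℝ, ∫ t in Iic z, (m - t - D) * p t
        = (∫ t in Iic z, (m - t) * p t) - D * ∫ t in Iic z, p t := by
      intro z
      calc ∫ t in Iic z, (m - t - D) * p t
          = ∫ t in Iic z, ((m - t) * p t - D * p t) := by congr 1; funext t; ring
        _ = (∫ t in Iic z, (m - t) * p t) - ∫ t in Iic z, D * p t :=
            integral_sub hq_int.integrableOn ((h1.integrable.const_mul D).integrableOn)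
        _ = (∫ t in Iic z, (m - t) * p t) - D * ∫ t in Iic z, p t := by
            rw [integral_const_mul]
    rcases le_or_gt y (m - D) with hcase | hcase
    · have h0 : 0 ≤ ∫ t in Iic y, (m - t - D) * p t :=
        setIntegral_nonneg measurableSet_Iic fun t ht =>
          mul_nonneg (by simp only [Set.mem_Iic] at ht; linarith) (hnn t)
      linarith [hJ y]
    · have hzero : ∫ t in Iic m, (m - t - D) * p t = 0 := by
        rw [hJ m, hA, hFm]; ring
      have hun : (∫ t in Iic y, (m - t - D) * p t) + ∫ t in Ioc y m, (m - t - D) * p t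
          = ∫ t in Iic m, (m - t - D) * p t := by
        rw [← setIntegral_union (Iic_disjoint_Ioc le_rfl) measurableSet_Ioc
          hJ_int.integrableOn hJ_int.integrableOn, Iic_union_Ioc_eq_Iic hy]
      have hnp : ∫ t in Ioc y m, (m - t - D) * p t ≤ 0 :=
        setIntegral_nonpos measurableSet_Ioc fun t ht =>
          mul_nonpos_of_nonpos_of_nonneg
            (by simp only [Set.mem_Ioc] at ht; linarith) (hnn t)
      linarith [hJ y]
  have hkeyR : ∀ y, m ≤ y → D * (∫ t in Ioi y, p t) ≤ ∫ t in Ioi y, (t - m) * p t := by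
    intro y hy
    have hK : ∀ z : ℝ, ∫ t in Ioi z, (t - m - D) * p t
        = (∫ t in Ioi z, (t - m) * p t) - D * ∫ t in Ioi z, p t := by
      intro z
      calc ∫ t in Ioi z, (t - m - D) * p t
          = ∫ t in Ioi z, ((t - m) * p t - D * p t) := by congr 1; funext t; ring
        _ = (∫ t in Ioi z, (t - m) * p t) - ∫ t in Ioi z, D * p t :=
            integral_sub htm_int.integrableOn ((h1.integrable.const_mul D).integrableOn)
        _ = (∫ t in Ioi z, (t - m) * p t) - D * ∫ t in Ioi z, p t := by
            rw [integral_const_mul]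
    rcases le_or_gt (m + D) y with hcase | hcase
    · have h0 : 0 ≤ ∫ t in Ioi y, (t - m - D) * p t :=
        setIntegral_nonneg measurableSet_Ioi fun t ht =>
          mul_nonneg (by simp only [Set.mem_Ioi] at ht; linarith) (hnn t)
      linarith [hK y]
    · have hzero : ∫ t in Ioi m, (t - m - D) * p t = 0 := by
        rw [hK m, hB, hFm']; ring
      have hun : (∫ t in Ioc m y, (t - m - D) * p t) + ∫ t in Ioi y, (t - m - D) * p t
          = ∫ t in Ioi m, (t - m - D) * p t := by
        rw [← setIntegral_union (Ioc_disjoint_Ioi le_rfl) measurableSet_Ioi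
          hK_int.integrableOn hK_int.integrableOn, Ioc_union_Ioi_eq_Ioi hy]
      have hnp : ∫ t in Ioc m y, (t - m - D) * p t ≤ 0 :=
        setIntegral_nonpos measurableSet_Ioc fun t ht =>
          mul_nonpos_of_nonpos_of_nonneg
            (by simp only [Set.mem_Ioc] at ht; linarith) (hnn t)
      linarith [hK y]
  -- bound on numerator
  have hNle : ∀ s : Set ℝ, MeasurableSet s →
      |∫ t in s, (h t - meanOf p h) * p t| ≤ M * ∫ t in s, p t := by
    intro s hs
    calc |∫ t in s, (h t - meanOf p h) * p t|
        ≤ ∫ t in s, |(h t - meanOf p h) * p t| := by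
          simpa only [Real.norm_eq_abs] using
            norm_integral_le_integral_norm (μ := volume.restrict s)
              (fun t => (h t - meanOf p h) * p t)
      _ ≤ ∫ t in s, M * p t :=
          integral_mono hg_int.abs.integrableOn
            ((h1.integrable.const_mul M).integrableOn) fun t => hptw t
      _ = M * ∫ t in s, p t := integral_const_mul _ _
  -- assemble
  have hpx := h1.pos x hx
  have hpxne : p x ≠ 0 := ne_of_gt hpx
  have hden : p x * etaFun (fun t => -c * (t - m)) p x = Ifun (fun t => -c * (t - m)) p x := by
    unfold etaFun; field_simp
  have hIx : Ifun (fun t => -c * (t - m)) p x = c * ∫ t in Iic x, (m - t) * p t := by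
    unfold Ifun
    rw [← integral_const_mul]
    congr 1; funext t; ring
  unfold gsol
  rw [hden, hIx]
  rcases le_total x m with hxm | hmx
  · have hF1 := hF1pos x hx
    have hQ := hkeyL x hxm
    have hQpos : 0 < ∫ t in Iic x, (m - t) * p t :=
      lt_of_lt_of_le (mul_pos hDpos hF1) hQ
    have hden_pos : 0 < c * ∫ t in Iic x, (m - t) * p t := mul_pos hc hQpos
    rw [abs_div, abs_of_pos hden_pos]
    calc |∫ t in Iic x, (h t - meanOf p h) * p t| / (c * ∫ t in Iic x, (m - t) * p t)
        ≤ (M * ∫ t in Iic x, p t) / (c * (D * ∫ t in Iic x, p t)) :=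
          div_le_div₀ (by positivity) (hNle _ measurableSet_Iic)
            (by positivity) (by nlinarith)
      _ = M / (c * D) := by
          rw [show c * (D * ∫ t in Iic x, p t) = (c * D) * ∫ t in Iic x, p t by ring,
            mul_div_mul_right _ _ (ne_of_gt hF1)]
  · have hF2 := hF2pos x hx
    have hQ := hkeyR x hmx
    have hNs := hsplit _ hg_int x
    rw [hg_total] at hNs
    have hQs := hsplit _ hq_int x
    rw [hq_total] at hQs
    have hIoiQ : ∫ t in Ioi x, (m - t) * p t = - ∫ t in Ioi x, (t - m) * p t := by
      rw [← integral_neg]; congr 1; funext t; ring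
    have hQ1 : ∫ t in Iic x, (m - t) * p t = ∫ t in Ioi x, (t - m) * p t := by
      rw [hIoiQ] at hQs; linarith
    have hQpos : 0 < ∫ t in Iic x, (m - t) * p t := by
      rw [hQ1]; exact lt_of_lt_of_le (mul_pos hDpos hF2) hQ
    have hden_pos : 0 < c * ∫ t in Iic x, (m - t) * p t := mul_pos hc hQpos
    rw [abs_div, abs_of_pos hden_pos]
    have hNabs : |∫ t in Iic x, (h t - meanOf p h) * p t|
        = |∫ t in Ioi x, (h t - meanOf p h) * p t| := by
      rw [show (∫ t in Iic x, (h t - meanOf p h) * p t)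
        = -(∫ t in Ioi x, (h t - meanOf p h) * p t) by linarith, abs_neg]
    calc |∫ t in Iic x, (h t - meanOf p h) * p t| / (c * ∫ t in Iic x, (m - t) * p t)
        ≤ (M * ∫ t in Ioi x, p t) / (c * (D * ∫ t in Ioi x, p t)) := by
          rw [hNabs, hQ1]
          exact div_le_div₀ (by positivity) (hNle _ measurableSet_Ioi)
            (by positivity) (by nlinarith)
      _ = M / (c * D) := by
          rw [show c * (D * ∫ t in Ioi x, p t) = (c * D) * ∫ t in Ioi x, p t by ring,
            mul_div_mul_right _ _ (ne_of_gt hF2)]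


end
end
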